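/- arXiv:1806.06090 — 7 statements merged into one kernel-verified Lean document; each statement's English description precedes it below -/
import Mathlib

section
/- A finite group G has exactly |G| − 1 cyclic subgroups if and only if G is isomorphic to C_3, C_4, S_3, or D_8. -/
/-!
The map `g ↦ ⟨g⟩` from `G` onto its cyclic subgroups identifies `g` with `g⁻¹`, and an element
with `g * g = 1` is the only generator of `⟨g⟩`. So `G` has `|G| - 1` cyclic subgroups exactly
when, up to inversion, a single element `a` has `a * a ≠ 1`. Such an `a` has order `3` or `4`.
Every `x ∉ ⟨a⟩` is an involution, and so is `x * a`; hence `x` inverts `a` by conjugation, and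
a product of two such elements commutes with `a ≠ a⁻¹`, so it lies in `⟨a⟩`. Thus `⟨a⟩` has
index at most two, and `G` is cyclic of order `n` or dihedral of order `2n`, with `n ∈ {3, 4}`.
-/

open Subgroup

section Dihedral

variable {G : Type*} [Group G]

theorem conj_eq_inv_of_mem_zpowers {a t : G} (hta : t * a * t⁻¹ = a⁻¹) {y : G}
    (hy : y ∈ zpowers a) : t * y * t⁻¹ = y⁻¹ := by
  obtain ⟨k, rfl⟩ := hy
  rw [← conj_zpow, hta, inv_zpow]

variable {n : ℕ} [NeZero n]

theorem pow_val_add_of_pow_eq_one {a : G} (ha : a ^ n = 1) (i j : ZMod n) :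
    a ^ (i + j).val = a ^ i.val * a ^ j.val := by
  rw [← pow_add, ZMod.val_add, ← pow_eq_pow_mod _ ha]

theorem pow_val_neg_of_pow_eq_one {a : G} (ha : a ^ n = 1) (i : ZMod n) :
    a ^ (-i).val = (a ^ i.val)⁻¹ :=
  eq_inv_of_mul_eq_one_left <| by
    rw [← pow_val_add_of_pow_eq_one ha, neg_add_cancel, ZMod.val_zero, pow_zero]

def DihedralGroup.lift (a t : G) (ha : a ^ n = 1) (ht : t * t = 1) (hta : t * a * t⁻¹ = a⁻¹) :
    DihedralGroup n →* G where
  toFun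
    | .r i => a ^ i.val
    | .sr i => t * a ^ i.val
  map_one' := by
    show a ^ (0 : ZMod n).val = 1
    rw [ZMod.val_zero, pow_zero]
  map_mul' := by
    have ht' : t⁻¹ = t := inv_eq_of_mul_eq_one_right ht
    have hswap : ∀ i : ZMod n, a ^ i.val * t = t * a ^ (-i).val := fun i => by
      rw [pow_val_neg_of_pow_eq_one ha,
        ← conj_eq_inv_of_mem_zpowers hta (pow_mem (mem_zpowers a) _), ht', ← mul_assoc,
        ← mul_assoc, ht, one_mul]
    rintro (i | i) (j | j)
    · exact pow_val_add_of_pow_eq_one ha i j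
    · show t * a ^ (j - i).val = a ^ i.val * (t * a ^ j.val)
      rw [← mul_assoc, hswap, mul_assoc, ← pow_val_add_of_pow_eq_one ha, neg_add_eq_sub]
    · show t * a ^ (i + j).val = t * a ^ i.val * a ^ j.val
      rw [mul_assoc, ← pow_val_add_of_pow_eq_one ha]
    · show a ^ (j - i).val = t * a ^ i.val * (t * a ^ j.val)
      rw [mul_assoc, ← mul_assoc (a ^ i.val), hswap, ← mul_assoc, ← mul_assoc, ht, one_mul,
        ← pow_val_add_of_pow_eq_one ha, neg_add_eq_sub]

theorem DihedralGroup.nonempty_mulEquiv_of_cover {a t : G} (ha : orderOf a = n) (ht : t * t = 1)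
    (hta : t * a * t⁻¹ = a⁻¹) (ht_mem : t ∉ zpowers a)
    (hcover : ∀ x, x ∈ zpowers a ∨ t * x ∈ zpowers a) :
    Nonempty (DihedralGroup n ≃* G) := by
  have ha' : a ^ n = 1 := by rw [← ha, pow_orderOf_eq_one]
  let f := DihedralGroup.lift a t ha' ht hta
  have hf_r : ∀ y ∈ zpowers a, ∃ i : ZMod n, f (.r i) = y := by
    intro y hy
    have hfin : IsOfFinOrder a := orderOf_pos_iff.1 (by rw [ha]; exact Nat.pos_of_neZero n)
    obtain ⟨m, rfl⟩ := hfin.mem_powers_iff_mem_zpowers.2 hy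
    refine ⟨m, ?_⟩
    show a ^ (m : ZMod n).val = a ^ m
    rw [ZMod.val_natCast, ← pow_eq_pow_mod _ ha']
  refine ⟨MulEquiv.ofBijective f ⟨(injective_iff_map_eq_one f).2 ?_, fun y => ?_⟩⟩
  · rintro (i | i) h
    · have hi : orderOf a ∣ i.val := orderOf_dvd_of_pow_eq_one h
      rw [ha] at hi
      rw [DihedralGroup.one_def, (ZMod.val_eq_zero i).1 (Nat.eq_zero_of_dvd_of_lt hi i.val_lt)]
    · have h' : t = (a ^ i.val)⁻¹ := eq_inv_of_mul_eq_one_left h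
      exact absurd (h' ▸ inv_mem (pow_mem (mem_zpowers a) _)) ht_mem
  · rcases hcover y with hy | hy
    · obtain ⟨i, hi⟩ := hf_r y hy
      exact ⟨_, hi⟩
    · obtain ⟨i, hi⟩ := hf_r _ hy
      refine ⟨.sr i, ?_⟩
      show t * f (.r i) = y
      rw [hi, ← mul_assoc, ht, one_mul]

end Dihedral

structure IsUniqueNonInvolution {G : Type*} [Group G] (a : G) : Prop where
  mul_self_ne_one : a * a ≠ 1
  mul_self_eq_one : ∀ x, x ≠ a → x ≠ a⁻¹ → x * x = 1

namespace IsUniqueNonInvolution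

variable {G : Type*} [Group G] {a : G}

theorem map {K : Type*} [Group K] (h : IsUniqueNonInvolution a) (e : G ≃* K) :
    IsUniqueNonInvolution (e a) where
  mul_self_ne_one := by rw [← map_mul, ne_eq, MulEquiv.map_eq_one_iff]; exact h.mul_self_ne_one
  mul_self_eq_one x hx hx' := by
    rw [← e.apply_symm_apply x, ← map_mul, map_eq_one_iff e e.injective]
    refine h.mul_self_eq_one _ (fun h' => hx ?_) (fun h' => hx' ?_)
    · rw [← h', e.apply_symm_apply]
    · rw [← map_inv, ← h', e.apply_symm_apply]

theorem orderOf_eq_three_or_four (h : IsUniqueNonInvolution a) :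
    orderOf a = 3 ∨ orderOf a = 4 := by
  have ha1 : a ≠ 1 := by rintro rfl; exact h.mul_self_ne_one (mul_one 1)
  by_cases h3 : a * a = a⁻¹
  · left
    exact orderOf_eq_prime (by rw [pow_succ, sq, h3, inv_mul_cancel]) ha1
  · right
    have h4 : a ^ 4 = 1 := by
      rw [show 4 = 2 * 2 from rfl, pow_mul, sq, sq]
      exact h.mul_self_eq_one _ (fun h' => ha1 (mul_eq_left.1 h')) h3
    refine orderOf_eq_prime_pow (p := 2) (n := 1) ?_ (by norm_num [h4])
    rw [pow_one, sq]; exact h.mul_self_ne_one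

theorem mul_self_eq_one_of_notMem (h : IsUniqueNonInvolution a) {x : G} (hx : x ∉ zpowers a) :
    x * x = 1 :=
  h.mul_self_eq_one x (fun e => hx (e ▸ mem_zpowers a))
    (fun e => hx (e ▸ inv_mem (mem_zpowers a)))

theorem eq_of_mul_self_ne_one (h : IsUniqueNonInvolution a) {x : G} (hx : x * x ≠ 1)
    (hx' : x ≠ a⁻¹) : x = a :=
  by_contra fun hxa => hx (h.mul_self_eq_one x hxa hx')

theorem conj_eq_inv (h : IsUniqueNonInvolution a) {x : G} (hx : x ∉ zpowers a) :
    x * a * x⁻¹ = a⁻¹ := by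
  have hxa : x * a ∉ zpowers a := fun h' =>
    hx (by simpa using mul_mem h' (inv_mem (mem_zpowers a)))
  rw [inv_eq_of_mul_eq_one_right (h.mul_self_eq_one_of_notMem hx)]
  exact eq_inv_of_mul_eq_one_left (by simpa only [mul_assoc] using h.mul_self_eq_one_of_notMem hxa)

theorem mul_mem_zpowers (h : IsUniqueNonInvolution a) {t x : G} (ht : t ∉ zpowers a)
    (hx : x ∉ zpowers a) : t * x ∈ zpowers a := by
  by_contra htx
  refine h.mul_self_ne_one (mul_eq_one_iff_eq_inv.2 ?_)
  calc a = (t * a * t⁻¹)⁻¹ := by rw [h.conj_eq_inv ht, inv_inv]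
    _ = t * (x * a * x⁻¹) * t⁻¹ := by rw [h.conj_eq_inv hx]; group
    _ = t * x * a * (t * x)⁻¹ := by group
    _ = a⁻¹ := h.conj_eq_inv htx

theorem nonempty_mulEquiv (h : IsUniqueNonInvolution a) :
    Nonempty (G ≃* Multiplicative (ZMod (orderOf a))) ∨
      Nonempty (G ≃* DihedralGroup (orderOf a)) := by
  have : NeZero (orderOf a) := ⟨by rcases h.orderOf_eq_three_or_four with h' | h' <;> simp [h']⟩
  by_cases hgen : ∀ x, x ∈ zpowers a
  · exact .inl
      ⟨(zmodMulEquivOfGenerator hgen (orderOf_eq_card_of_forall_mem_zpowers hgen).symm).symm⟩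
  · obtain ⟨t, ht⟩ := not_forall.1 hgen
    refine .inr ?_
    obtain ⟨e⟩ := DihedralGroup.nonempty_mulEquiv_of_cover rfl (h.mul_self_eq_one_of_notMem ht)
      (h.conj_eq_inv ht) ht fun x => or_iff_not_imp_left.2 (h.mul_mem_zpowers ht)
    exact ⟨e.symm⟩

end IsUniqueNonInvolution

section Counting

variable {G : Type*} [Group G]

theorem eq_of_zpowers_eq_of_mul_self_eq_one {x y : G} (hx : x * x = 1)
    (h : zpowers y = zpowers x) : y = x := by
  have hx2 : x ^ 2 = 1 := by rw [sq, hx]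
  have hy : y ∈ zpowers x := h ▸ mem_zpowers y
  have hfin : IsOfFinOrder x := isOfFinOrder_iff_pow_eq_one.2 ⟨2, two_pos, hx2⟩
  obtain ⟨m, rfl⟩ := hfin.mem_powers_iff_mem_zpowers.2 hy
  dsimp only at h ⊢
  rw [pow_eq_pow_mod m hx2] at h ⊢
  rcases Nat.mod_two_eq_zero_or_one m with hm | hm <;> rw [hm] at h ⊢
  · rw [pow_zero, zpowers_one_eq_bot, eq_comm, zpowers_eq_bot] at h
    rw [pow_zero, h]
  · exact pow_one x

def zpowersCyclic (g : G) : {H : Subgroup G // IsCyclic H} := ⟨zpowers g, inferInstance⟩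

theorem zpowersCyclic_surjective : Function.Surjective (zpowersCyclic (G := G)) := fun H =>
  let ⟨g, hg⟩ := H.1.isCyclic_iff_exists_zpowers_eq_top.1 H.2
  ⟨g, Subtype.ext hg⟩

theorem zpowersCyclic_inv (g : G) : zpowersCyclic g⁻¹ = zpowersCyclic g :=
  Subtype.ext zpowers_inv

variable [Finite G]

theorem card_cyclicSubgroups_le_card_sub_ncard (s : Set G) (hs : ∀ g ∈ s, g⁻¹ ∉ s) :
    Nat.card {H : Subgroup G // IsCyclic H} ≤ Nat.card G - s.ncard := by
  rw [← Set.ncard_compl, ← Nat.card_coe_set_eq]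
  refine Nat.card_le_card_of_surjective (fun g : ↥sᶜ => zpowersCyclic g.1) fun H => ?_
  obtain ⟨g, rfl⟩ := zpowersCyclic_surjective H
  by_cases hg : g ∈ s
  · exact ⟨⟨g⁻¹, hs g hg⟩, zpowersCyclic_inv g⟩
  · exact ⟨⟨g, hg⟩, rfl⟩

theorem IsUniqueNonInvolution.card_cyclicSubgroups {a : G} (h : IsUniqueNonInvolution a) :
    Nat.card {H : Subgroup G // IsCyclic H} = Nat.card G - 1 := by
  have ha : a ≠ a⁻¹ := fun e => h.mul_self_ne_one (mul_eq_one_iff_eq_inv.2 e)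
  refine le_antisymm ?_ ?_
  · simpa using card_cyclicSubgroups_le_card_sub_ncard {a⁻¹} (by simpa using ha.symm)
  rw [← Set.ncard_singleton a⁻¹, ← Set.ncard_compl, ← Nat.card_coe_set_eq]
  refine Nat.card_le_card_of_injective (fun g : ↥({a⁻¹}ᶜ : Set G) => zpowersCyclic g.1) ?_
  rintro ⟨x, hx⟩ ⟨y, hy⟩ hxy
  replace hxy : zpowers x = zpowers y := congrArg Subtype.val hxy
  apply Subtype.ext
  change x = y
  rw [Set.mem_compl_singleton_iff] at hx hy
  by_cases hx1 : x * x = 1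
  · exact (eq_of_zpowers_eq_of_mul_self_eq_one hx1 hxy.symm).symm
  by_cases hy1 : y * y = 1
  · exact eq_of_zpowers_eq_of_mul_self_eq_one hy1 hxy
  rw [h.eq_of_mul_self_ne_one hx1 hx, h.eq_of_mul_self_ne_one hy1 hy]

theorem exists_isUniqueNonInvolution_of_card_cyclicSubgroups
    (hcard : Nat.card {H : Subgroup G // IsCyclic H} = Nat.card G - 1) :
    ∃ a : G, IsUniqueNonInvolution a := by
  have hninj : ¬Function.Injective (zpowersCyclic (G := G)) := fun hinj => by
    have := Nat.card_le_card_of_injective _ hinj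
    have : 0 < Nat.card G := Nat.card_pos
    omega
  obtain ⟨u, v, heq, huv⟩ := Function.not_injective_iff.1 hninj
  have hu : u ≠ u⁻¹ := fun hu => huv <| Eq.symm <| eq_of_zpowers_eq_of_mul_self_eq_one
    (mul_eq_one_iff_eq_inv.2 hu) (congrArg Subtype.val heq).symm
  refine ⟨u, fun h => hu (mul_eq_one_iff_eq_inv.1 h), fun x hxu hxu' => ?_⟩
  by_contra hx2
  have hx : x ≠ x⁻¹ := fun h => hx2 (mul_eq_one_iff_eq_inv.2 h)
  have hux : u ≠ x⁻¹ := fun e => hxu' (by rw [e, inv_inv])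
  have hle := card_cyclicSubgroups_le_card_sub_ncard {u⁻¹, x⁻¹} (by
    simp only [Set.mem_insert_iff, Set.mem_singleton_iff, inv_inv, forall_eq_or_imp, forall_eq]
    tauto)
  rw [Set.ncard_pair (by simpa using hxu.symm)] at hle
  have : 1 < Nat.card G := Finite.one_lt_card_iff_nontrivial.2 ⟨u, v, huv⟩
  omega

end Counting

noncomputable def DihedralGroup.mulEquivPermFinThree : DihedralGroup 3 ≃* Equiv.Perm (Fin 3) :=
  MulEquiv.ofBijective (DihedralGroup.lift (finRotate 3) (Equiv.swap 0 1) (by decide) (by decide)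
    (by decide)) (by decide)

theorem isUniqueNonInvolution_ofAdd_one_three :
    IsUniqueNonInvolution (Multiplicative.ofAdd (1 : ZMod 3)) := ⟨by decide, by decide⟩

theorem isUniqueNonInvolution_ofAdd_one_four :
    IsUniqueNonInvolution (Multiplicative.ofAdd (1 : ZMod 4)) := ⟨by decide, by decide⟩

theorem DihedralGroup.isUniqueNonInvolution_r_one_three :
    IsUniqueNonInvolution (DihedralGroup.r 1 : DihedralGroup 3) := ⟨by decide, by decide⟩

theorem DihedralGroup.isUniqueNonInvolution_r_one_four :
    IsUniqueNonInvolution (DihedralGroup.r 1 : DihedralGroup 4) := ⟨by decide, by decide⟩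

theorem stmt_1 (G : Type*) [Group G] [Finite G] :
    Nat.card {H : Subgroup G // IsCyclic H} = Nat.card G - 1 ↔
      (Nonempty (G ≃* Multiplicative (ZMod 3)) ∨
       Nonempty (G ≃* Multiplicative (ZMod 4)) ∨
       Nonempty (G ≃* Equiv.Perm (Fin 3)) ∨
       Nonempty (G ≃* DihedralGroup 4)) := by
  constructor
  · intro hcard
    obtain ⟨a, h⟩ := exists_isUniqueNonInvolution_of_card_cyclicSubgroups hcard
    rcases h.orderOf_eq_three_or_four with ha | ha <;> rcases h.nonempty_mulEquiv with he | he <;>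
      rw [ha] at he <;> obtain ⟨e⟩ := he
    · exact .inl ⟨e⟩
    · exact .inr <| .inr <| .inl ⟨e.trans DihedralGroup.mulEquivPermFinThree⟩
    · exact .inr <| .inl ⟨e⟩
    · exact .inr <| .inr <| .inr ⟨e⟩
  · rintro (he | he | he | he) <;> obtain ⟨e⟩ := he
    · exact (isUniqueNonInvolution_ofAdd_one_three.map e.symm).card_cyclicSubgroups
    · exact (isUniqueNonInvolution_ofAdd_one_four.map e.symm).card_cyclicSubgroups
    · exact (DihedralGroup.isUniqueNonInvolution_r_one_three.map
        (DihedralGroup.mulEquivPermFinThree.trans e.symm)).card_cyclicSubgroups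
    · exact (DihedralGroup.isUniqueNonInvolution_r_one_four.map e.symm).card_cyclicSubgroups
end

section
/- A finite group G has exactly |G| − 2 cyclic subgroups if and only if G is isomorphic to C_4 × C_2, D_8 × C_2, C_6, or D_12. -/
/-!
Each cyclic subgroup `C` has `φ |C|` generators and each element generates exactly one cyclic
subgroup, so `∑_C φ |C| = |G|` and `|G|` minus the number of cyclic subgroups is
`∑_C (φ |C| - 1)`. Since `φ n = 1` for `n ≤ 2` and `φ n` is even otherwise, this excess is `2`
exactly when there are precisely two cyclic subgroups `⟨a⟩ ≠ ⟨b⟩` of order `> 2`, both with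
`φ = 2` (so of order 3, 4 or 6), and they contain every element of order `> 2`.

If all elements outside a subgroup `N` are involutions, each of them inverts `N`, and, as soon
as `N` has an element of order `> 2`, the product of two of them lies in `N`: `G` is `N` or the
generalized dihedral group of `N`.
If `a ∈ ⟨b⟩`, this applies to `N = ⟨b⟩` with `|b| = 6`, giving `C₆` or `D₁₂`. Otherwise every
product of a power of `a` and a power of `b` outside both subgroups is an involution; this forces
`a` and `b` to commute and `|a| = 4`, and with `t = ab` it applies to `N = ⟨a⟩ × ⟨t⟩ ≅ C₄ × C₂`,
giving `C₄ × C₂` or `D₈ × C₂`. The converse is a finite computation.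
-/

open Subgroup

theorem Nat.eq_three_or_eq_four_or_eq_six_of_totient_eq_two {n : ℕ} (h : n.totient = 2) :
    n = 3 ∨ n = 4 ∨ n = 6 := by
  have hn : n ≠ 0 := by rintro rfl; simp at h
  -- a prime power `q ∣ n` has `φ q ∣ 2`, hence `q ≤ 6` and `q ∣ 12`
  have h12 : n ∣ 12 := by
    refine (Nat.dvd_iff_prime_pow_dvd_dvd 12 n).2 fun p k hp hpk => ?_
    obtain _ | k := k
    · simp
    have hφ : p ^ k * (p - 1) ≤ 2 := by
      rw [← Nat.totient_prime_pow_succ hp, ← h]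
      exact Nat.le_of_dvd (by omega) (Nat.totient_dvd_of_dvd hpk)
    have htot : (p ^ (k + 1)).totient ≤ 2 := by rwa [Nat.totient_prime_pow_succ hp]
    have hpos : 0 < p ^ (k + 1) := pow_pos hp.pos _
    have hle : p ^ (k + 1) ≤ 6 := by
      have hk : 1 ≤ p ^ k := Nat.one_le_pow k p hp.pos
      have hp3 : p ≤ 3 := by have := le_trans (Nat.le_mul_of_pos_left _ hk) hφ; omega
      have hk2 : p ^ k ≤ 2 :=
        le_trans (Nat.le_mul_of_pos_right _ (by have := hp.two_le; omega)) hφ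
      rw [pow_succ]
      exact Nat.mul_le_mul hk2 hp3
    generalize p ^ (k + 1) = q at hle htot hpos
    interval_cases q <;> revert htot <;> decide
  have := Nat.le_of_dvd (by norm_num) h12
  interval_cases n <;> revert h <;> decide

theorem Nat.two_lt_of_totient_eq_two {n : ℕ} (h : n.totient = 2) : 2 < n := by
  rcases Nat.eq_three_or_eq_four_or_eq_six_of_totient_eq_two h with rfl | rfl | rfl <;>
    norm_num

theorem exists_pair_of_sum_totient_sub_one_eq_two {ι : Type*} [Fintype ι] (n : ι → ℕ)
    (hn : ∀ i, n i ≠ 0) (h : ∑ i, ((n i).totient - 1) = 2) :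
    ∃ i j, i ≠ j ∧ (n i).totient = 2 ∧ (n j).totient = 2 ∧ ∀ k, 2 < n k → k = i ∨ k = j := by
  classical
  set S := Finset.univ.filter fun i => 2 < n i
  have htot : ∀ i ∈ S, (n i).totient = 2 := by
    intro i hi
    have h2 := (Finset.mem_filter.1 hi).2
    have hle : (n i).totient - 1 ≤ 2 :=
      h ▸ Finset.single_le_sum (f := fun i => (n i).totient - 1) (by simp) (Finset.mem_univ i)
    have hne : (n i).totient ≠ 1 := by rw [Ne, Nat.totient_eq_one_iff]; omega
    obtain ⟨m, hm⟩ := Nat.totient_even h2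
    have := Nat.totient_pos.2 (Nat.pos_of_ne_zero (hn i))
    omega
  have hS : S.card = 2 := by
    rw [← h, ← Finset.sum_filter_of_ne (p := fun i => 2 < n i), Finset.card_eq_sum_ones]
    · exact Finset.sum_congr rfl fun i hi => by rw [htot i hi]
    · intro i _ hi
      have : (n i).totient ≠ 1 := by omega
      rw [Ne, Nat.totient_eq_one_iff] at this
      have := hn i
      omega
  obtain ⟨i, j, hij, hSij⟩ := Finset.card_eq_two.1 hS
  have hmem : ∀ k, 2 < n k ↔ k = i ∨ k = j := fun k => by
    simpa [S] using Finset.ext_iff.1 hSij k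
  exact ⟨i, j, hij, htot i (by simp [hSij]), htot j (by simp [hSij]), fun k hk => (hmem k).1 hk⟩

section Generators

variable {G : Type*} [Group G] [Finite G]

theorem sq_eq_one_iff_orderOf_le_two {g : G} : g ^ 2 = 1 ↔ orderOf g ≤ 2 := by
  refine ⟨orderOf_le_of_pow_eq_one two_pos, fun h => orderOf_dvd_iff_pow_eq_one.1 ?_⟩
  have := orderOf_pos g
  interval_cases orderOf g <;> norm_num

theorem zpowers_eq_zpowers_of_mem {a g : G} (h : g ∈ zpowers a) (ho : orderOf g = orderOf a) :
    zpowers g = zpowers a :=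
  eq_of_le_of_card_ge (zpowers_le.2 h) (by rw [Nat.card_zpowers, Nat.card_zpowers, ho])

theorem card_generators_zpowers (a : G) :
    Nat.card {g : G // zpowers g = zpowers a} = (orderOf a).totient := by
  classical
  let e : {g : G // zpowers g = zpowers a} ≃ {c : zpowers a // orderOf c = orderOf a} :=
    { toFun g := ⟨⟨g, g.2.le (mem_zpowers _)⟩, by
        rw [Subgroup.orderOf_mk, ← Nat.card_zpowers, g.2, Nat.card_zpowers]⟩
      invFun c := ⟨c, zpowers_eq_zpowers_of_mem c.1.2 (by rw [Subgroup.orderOf_coe, c.2])⟩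
      left_inv _ := rfl
      right_inv _ := rfl }
  have := Fintype.ofFinite (zpowers a)
  rw [Nat.card_congr e, Nat.card_eq_fintype_card, Fintype.card_subtype, ← Nat.card_zpowers,
    Nat.card_eq_fintype_card, IsCyclic.card_orderOf_eq_totient dvd_rfl]

theorem eq_or_eq_inv_of_zpowers_eq {a g : G} (ha : (orderOf a).totient = 2)
    (h : zpowers g = zpowers a) : g = a ∨ g = a⁻¹ := by
  have ha2 : a ≠ a⁻¹ := fun h' => by
    have : a ^ 2 = 1 := by rw [sq]; nth_rw 2 [h']; exact mul_inv_cancel a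
    have := sq_eq_one_iff_orderOf_le_two.1 this
    have := Nat.two_lt_of_totient_eq_two ha
    omega
  obtain ⟨y, -, hy⟩ := (Nat.card_eq_two_iff' (⟨a, rfl⟩ : {g : G // zpowers g = zpowers a})).1
    (card_generators_zpowers a ▸ ha)
  refine or_iff_not_imp_left.2 fun hga => ?_
  have h1 := hy ⟨g, h⟩ fun e => hga (congrArg Subtype.val e)
  have h2 := hy ⟨a⁻¹, zpowers_inv⟩ fun e => ha2 (congrArg Subtype.val e).symm
  exact congrArg Subtype.val (h1.trans h2.symm)

theorem card_eq_sum_totient [Fintype {H : Subgroup G // IsCyclic H}] :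
    Nat.card G = ∑ C : {H : Subgroup G // IsCyclic H}, (Nat.card C).totient := by
  let gen : G → {H : Subgroup G // IsCyclic H} := fun g => ⟨zpowers g, inferInstance⟩
  rw [← Nat.card_congr (Equiv.sigmaFiberEquiv gen), Nat.card_sigma]
  refine Fintype.sum_congr _ _ fun C => ?_
  obtain ⟨a, ha⟩ := (Subgroup.isCyclic_iff_exists_zpowers_eq_top C.1).1 C.2
  rw [← ha, Nat.card_zpowers, ← card_generators_zpowers a]
  exact Nat.card_congr (Equiv.subtypeEquivRight fun g => by simp [gen, Subtype.ext_iff, ha])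

theorem exists_of_card_isCyclic_eq_card_sub_two
    (h : Nat.card {H : Subgroup G // IsCyclic H} = Nat.card G - 2) :
    ∃ a b : G, zpowers a ≠ zpowers b ∧ (orderOf a).totient = 2 ∧ (orderOf b).totient = 2 ∧
      ∀ g : G, 2 < orderOf g → zpowers g = zpowers a ∨ zpowers g = zpowers b := by
  classical
  have := Fintype.ofFinite {H : Subgroup G // IsCyclic H}
  have hsum : ∑ C : {H : Subgroup G // IsCyclic H}, ((Nat.card C).totient - 1) = 2 := by
    have hpos : ∀ C : {H : Subgroup G // IsCyclic H}, 1 ≤ (Nat.card C).totient :=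
      fun C => Nat.totient_pos.2 Nat.card_pos
    have hone : 1 ≤ Nat.card {H : Subgroup G // IsCyclic H} :=
      Nat.card_pos_iff.2 ⟨⟨⟨⊥, inferInstance⟩⟩, inferInstance⟩
    rw [Finset.sum_tsub_distrib _ (fun C _ => hpos C), ← card_eq_sum_totient, Finset.sum_const,
      smul_eq_mul, mul_one, Finset.card_univ, ← Nat.card_eq_fintype_card]
    omega
  obtain ⟨A, B, hAB, hA, hB, hlarge⟩ :=
    exists_pair_of_sum_totient_sub_one_eq_two _ (fun C => Nat.card_pos.ne') hsum
  obtain ⟨a, ha⟩ := (Subgroup.isCyclic_iff_exists_zpowers_eq_top A.1).1 A.2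
  obtain ⟨b, hb⟩ := (Subgroup.isCyclic_iff_exists_zpowers_eq_top B.1).1 B.2
  refine ⟨a, b, fun h => hAB (Subtype.ext (ha ▸ hb ▸ h)), ?_, ?_, fun g hg => ?_⟩
  · rwa [← Nat.card_zpowers, ha]
  · rwa [← Nat.card_zpowers, hb]
  · rw [ha, hb]
    simpa [Subtype.ext_iff] using hlarge ⟨zpowers g, inferInstance⟩ (by rwa [Nat.card_zpowers])

end Generators

section Recognition

variable {G : Type*} [Group G]

theorem exists_injective_range_eq_zpowers {w : G} {n : ℕ} (hw : orderOf w = n) :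
    ∃ ι : Multiplicative (ZMod n) →* G, Function.Injective ι ∧ ι.range = zpowers w := by
  let e : Multiplicative (ZMod n) ≃* zpowers w :=
    mulEquivOfCyclicCardEq (by rw [Nat.card_zpowers, hw]; exact Nat.card_zmod n)
  refine ⟨(zpowers w).subtype.comp e.toMonoidHom, Subtype.val_injective.comp e.injective, ?_⟩
  rw [MonoidHom.range_comp, MonoidHom.range_eq_top.2 e.surjective, ← MonoidHom.range_eq_map,
    range_subtype]

section Involutions

variable {N : Subgroup G} (hN : ∀ g ∉ N, g ^ 2 = 1)
include hN

theorem conj_eq_inv_of_notMem {g n : G} (hg : g ∉ N) (hn : n ∈ N) : g * n * g⁻¹ = n⁻¹ := by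
  have hgn : g * n ∉ N := fun h => hg (by simpa using N.mul_mem h (N.inv_mem hn))
  have h1 := hN _ hgn
  have h2 := hN _ hg
  rw [sq] at h1 h2
  rw [inv_eq_of_mul_eq_one_right h2, ← mul_inv_eq_one, inv_inv]
  simpa [mul_assoc] using h1

theorem mul_mem_of_notMem {g h n : G} (hn : n ∈ N) (hn2 : n ^ 2 ≠ 1) (hg : g ∉ N)
    (hh : h ∉ N) : g * h ∈ N := by
  by_contra hgh
  have h1 := conj_eq_inv_of_notMem hN hgh hn
  rw [show g * h * n * (g * h)⁻¹ = g * (h * n * h⁻¹) * g⁻¹ by group,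
    conj_eq_inv_of_notMem hN hh hn, conj_eq_inv_of_notMem hN hg (N.inv_mem hn), inv_inv] at h1
  exact hn2 (sq n ▸ mul_eq_one_iff_eq_inv.2 h1)

end Involutions

section Dihedral

variable {n : ℕ}

def dihedralLift (ι : Multiplicative (ZMod n) →* G) (s : G) (hs : s ^ 2 = 1)
    (hι : ∀ a, s * ι a * s⁻¹ = (ι a)⁻¹) : DihedralGroup n →* G where
  toFun
    | .r i => ι (.ofAdd i)
    | .sr i => s * ι (.ofAdd i)
  map_one' := ι.map_one
  map_mul' := by
    have hcomm : ∀ i : ZMod n, ι (.ofAdd i) * s = s * ι (.ofAdd (-i)) := fun i => by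
      have := hι (.ofAdd (-i))
      rw [← map_inv, ← ofAdd_neg, neg_neg] at this
      rw [← this, inv_mul_cancel_right]
    rintro (i | i) (j | j)
    · simp [DihedralGroup.r_mul_r, ofAdd_add]
    · simp only [DihedralGroup.r_mul_sr]
      rw [← mul_assoc, hcomm, mul_assoc, ← map_mul, sub_eq_neg_add, ofAdd_add]
    · simp only [DihedralGroup.sr_mul_r, ofAdd_add, map_mul, mul_assoc]
    · simp only [DihedralGroup.sr_mul_sr]
      rw [← mul_assoc, mul_assoc s, hcomm, ← mul_assoc, ← sq, hs, one_mul, ← map_mul,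
        sub_eq_neg_add, ofAdd_add]

variable (ι : Multiplicative (ZMod n) →* G) (s : G) (hs : s ^ 2 = 1)
  (hι : ∀ a, s * ι a * s⁻¹ = (ι a)⁻¹)

@[simp]
theorem dihedralLift_sr (i : ZMod n) : dihedralLift ι s hs hι (.sr i) = s * ι (.ofAdd i) := rfl

theorem mem_range_dihedralLift {g : G} :
    g ∈ (dihedralLift ι s hs hι).range ↔ g ∈ ι.range ∨ s * g ∈ ι.range := by
  have hss : s * s = 1 := sq s ▸ hs
  constructor
  · rintro ⟨i | i, rfl⟩
    · exact Or.inl ⟨_, rfl⟩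
    · exact Or.inr ⟨.ofAdd i, by simp [← mul_assoc, hss]⟩
  · rintro (⟨a, rfl⟩ | ⟨a, ha⟩)
    · exact ⟨.r a.toAdd, rfl⟩
    · exact ⟨.sr a.toAdd, by simp [ha, ← mul_assoc, hss]⟩

theorem dihedralLift_injective (hinj : Function.Injective ι) (hsι : s ∉ ι.range) :
    Function.Injective (dihedralLift ι s hs hι) := by
  refine (injective_iff_map_eq_one _).2 ?_
  rintro (i | i) h
  · exact congrArg (DihedralGroup.r ∘ Multiplicative.toAdd) (hinj (h.trans ι.map_one.symm))
  · refine absurd ⟨(Multiplicative.ofAdd i)⁻¹, ?_⟩ hsι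
    rw [map_inv, inv_eq_of_mul_eq_one_left h]

end Dihedral

theorem nonempty_mulEquiv_zmod_or_dihedralGroup {w : G} {n : ℕ} (hw : orderOf w = n)
    (hn : 2 < n) (h : ∀ g ∉ zpowers w, g ^ 2 = 1) :
    Nonempty (G ≃* Multiplicative (ZMod n)) ∨ Nonempty (G ≃* DihedralGroup n) := by
  by_cases htop : zpowers w = ⊤
  · have : IsCyclic G := isCyclic_iff_exists_zpowers_eq_top.2 ⟨w, htop⟩
    refine Or.inl ⟨mulEquivOfCyclicCardEq ?_⟩
    rw [← card_top (G := G), ← htop, Nat.card_zpowers, hw]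
    exact (Nat.card_zmod n).symm
  obtain ⟨s, hs⟩ : ∃ s, s ∉ zpowers w := by simpa [eq_top_iff'] using htop
  obtain ⟨ι, hinj, hrange⟩ := exists_injective_range_eq_zpowers hw
  have hι : ∀ a, s * ι a * s⁻¹ = (ι a)⁻¹ := fun a =>
    conj_eq_inv_of_notMem h hs (hrange ▸ ⟨a, rfl⟩)
  have hw2 : w ^ 2 ≠ 1 := fun h2 => by have := orderOf_le_of_pow_eq_one two_pos h2; omega
  refine Or.inr ⟨(MulEquiv.ofBijective (dihedralLift ι s (h s hs) hι) ⟨?_, fun g => ?_⟩).symm⟩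
  · exact dihedralLift_injective ι s _ hι hinj (hrange ▸ hs)
  · rw [← MonoidHom.mem_range, mem_range_dihedralLift, hrange]
    by_cases hg : g ∈ zpowers w
    · exact Or.inl hg
    · exact Or.inr (mul_mem_of_notMem h (mem_zpowers w) hw2 hs hg)

theorem nonempty_mulEquiv_prod_zmod_two {K : Type*} [Group K] (ι : K →* G)
    (hinj : Function.Injective ι) {t : G} (ht : orderOf t = 2) (htι : t ∉ ι.range)
    (hcomm : ∀ k, Commute (ι k) t) (hsup : ι.range ⊔ zpowers t = ⊤) :
    Nonempty (G ≃* K × Multiplicative (ZMod 2)) := by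
  obtain ⟨χ, hχ, hχr⟩ := exists_injective_range_eq_zpowers ht
  have hcomm' : ∀ k c, Commute (ι k) (χ c) := fun k c => by
    obtain ⟨m, hm⟩ : χ c ∈ zpowers t := hχr ▸ ⟨c, rfl⟩
    exact hm ▸ (hcomm k).zpow_right m
  have hdisj : Disjoint ι.range χ.range := by
    rw [hχr, disjoint_def]
    rintro x hx ⟨k, rfl⟩
    dsimp only at hx ⊢
    rw [← zpow_mod_orderOf, ht, Nat.cast_ofNat] at hx ⊢
    rcases Int.emod_two_eq k with hk | hk <;> rw [hk] at hx ⊢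
    · exact zpow_zero t
    · exact absurd (by simpa using hx) htι
  refine ⟨(MulEquiv.ofBijective (ι.noncommCoprod χ hcomm')
    ⟨(MonoidHom.noncommCoprod_injective _ _ _).2 ⟨hinj, hχ, hdisj⟩, ?_⟩).symm⟩
  rw [← MonoidHom.range_eq_top, MonoidHom.noncommCoprod_range, hχr, hsup]

theorem nonempty_mulEquiv_dihedralGroup_prod_zmod_two {x t s : G} {n : ℕ} (hx : orderOf x = n)
    (hn : 2 < n) (ht : orderOf t = 2) (hxt : Commute x t) (htx : t ∉ zpowers x)
    (h : ∀ g ∉ zpowers x ⊔ zpowers t, g ^ 2 = 1) (hs : s ∉ zpowers x ⊔ zpowers t) :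
    Nonempty (G ≃* DihedralGroup n × Multiplicative (ZMod 2)) := by
  set P := zpowers x ⊔ zpowers t
  obtain ⟨ι, hinj, hrange⟩ := exists_injective_range_eq_zpowers hx
  have hι : ∀ a, s * ι a * s⁻¹ = (ι a)⁻¹ := fun a =>
    conj_eq_inv_of_notMem h hs (mem_sup_left (hrange ▸ ⟨a, rfl⟩))
  set D := dihedralLift ι s (h s hs) hι
  have hιt : ∀ a, Commute (ι a) t := fun a => by
    obtain ⟨m, hm⟩ : ι a ∈ zpowers x := hrange ▸ ⟨a, rfl⟩
    exact hm ▸ hxt.zpow_left m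
  have hst : Commute s t := by
    have := conj_eq_inv_of_notMem h hs (mem_sup_right (mem_zpowers t))
    have ht2 : t * t = 1 := by rw [← sq, ← ht]; exact pow_orderOf_eq_one t
    rwa [inv_eq_of_mul_eq_one_right ht2, mul_inv_eq_iff_eq_mul] at this
  have hPD : P ≤ D.range ⊔ zpowers t := sup_le
    (fun g hg => mem_sup_left ((mem_range_dihedralLift ι s _ hι).2 (Or.inl (hrange ▸ hg))))
    le_sup_right
  have hsD : s ∈ D.range ⊔ zpowers t :=
    mem_sup_left ((mem_range_dihedralLift ι s _ hι).2 (Or.inr ⟨1, by simp [← sq, h s hs]⟩))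
  have hx2 : x ^ 2 ≠ 1 := fun h => by have := orderOf_le_of_pow_eq_one two_pos h; omega
  refine nonempty_mulEquiv_prod_zmod_two D
    (dihedralLift_injective ι s _ hι hinj fun h => hs (mem_sup_left (hrange ▸ h))) ht ?_ ?_ ?_
  · rw [mem_range_dihedralLift, hrange]
    rintro (h | h)
    · exact htx h
    · exact hs (by
        simpa using mul_mem (mem_sup_left h) (inv_mem (mem_sup_right (mem_zpowers t))))
  · rintro (i | i)
    · exact hιt _
    · exact hst.mul_left (hιt _)
  · refine (eq_top_iff' _).2 fun g => ?_
    by_cases hg : g ∈ P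
    · exact hPD hg
    · simpa using mul_mem (inv_mem hsD)
        (hPD (mul_mem_of_notMem h (mem_sup_left (mem_zpowers x)) hx2 hs hg))

theorem nonempty_mulEquiv_zmod_prod_or_dihedralGroup_prod {x t : G} {n : ℕ}
    (hx : orderOf x = n) (hn : 2 < n) (ht : orderOf t = 2) (hxt : Commute x t)
    (htx : t ∉ zpowers x) (h : ∀ g ∉ zpowers x ⊔ zpowers t, g ^ 2 = 1) :
    Nonempty (G ≃* Multiplicative (ZMod n) × Multiplicative (ZMod 2)) ∨
      Nonempty (G ≃* DihedralGroup n × Multiplicative (ZMod 2)) := by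
  by_cases htop : zpowers x ⊔ zpowers t = ⊤
  · obtain ⟨ι, hinj, hrange⟩ := exists_injective_range_eq_zpowers hx
    refine Or.inl (nonempty_mulEquiv_prod_zmod_two ι hinj ht (hrange ▸ htx) (fun a => ?_)
      (hrange ▸ htop))
    obtain ⟨m, hm⟩ : ι a ∈ zpowers x := hrange ▸ ⟨a, rfl⟩
    exact hm ▸ hxt.zpow_left m
  obtain ⟨s, hs⟩ : ∃ s, s ∉ zpowers x ⊔ zpowers t := by simpa [eq_top_iff'] using htop
  exact Or.inr (nonempty_mulEquiv_dihedralGroup_prod_zmod_two hx hn ht hxt htx h hs)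

end Recognition

section Classification

variable {G : Type*} [Group G] [Finite G] {x y : G}
  (hL : ∀ g : G, 2 < orderOf g → g ∈ zpowers x ∨ g ∈ zpowers y)
include hL

theorem sq_mul_eq_one_of_notMem {u v : G} (hu : u ∈ zpowers x) (hu' : u ∉ zpowers y)
    (hv : v ∈ zpowers y) (hv' : v ∉ zpowers x) : (u * v) ^ 2 = 1 := by
  refine sq_eq_one_iff_orderOf_le_two.2 (not_lt.1 fun h => ?_)
  rcases hL _ h with h | h
  · exact hv' (by simpa using mul_mem (inv_mem hu) h)
  · exact hu' (by simpa using mul_mem h (inv_mem hv))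

theorem commute_of_notMem (hx : (orderOf x).totient = 2) (hy : 2 < orderOf y)
    (hxy : x ∉ zpowers y) (hyx : y ∉ zpowers x) : Commute x y := by
  have hc : orderOf (y * x * y⁻¹) = orderOf x := by
    simpa using MulEquiv.orderOf_eq (MulAut.conj y) x
  have hcx : y * x * y⁻¹ ∈ zpowers x := by
    refine (hL _ (hc ▸ Nat.two_lt_of_totient_eq_two hx)).resolve_right fun h => hxy ?_
    simpa [mul_assoc] using mul_mem (mul_mem (inv_mem (mem_zpowers y)) h) (mem_zpowers y)
  rcases eq_or_eq_inv_of_zpowers_eq hx (zpowers_eq_zpowers_of_mem hcx hc) with h | h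
  · exact eq_mul_inv_iff_mul_eq.1 h.symm
  · -- if `y` inverted `x`, then `(x * y) ^ 2 = y ^ 2` would be nontrivial
    have h2 := sq_mul_eq_one_of_notMem hL (mem_zpowers x) hxy (mem_zpowers y) hyx
    rw [sq, show x * y * (x * y) = x * (y * x * y⁻¹) * (y * y) by group, h, mul_inv_cancel,
      one_mul, ← sq, sq_eq_one_iff_orderOf_le_two] at h2
    omega

theorem orderOf_eq_four_of_notMem (hx : (orderOf x).totient = 2) (hy : 2 < orderOf y)
    (hxy : x ∉ zpowers y) (hyx : y ∉ zpowers x) : orderOf x = 4 := by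
  have hc := commute_of_notMem hL hx hy hxy hyx
  have h1 := sq_mul_eq_one_of_notMem hL (mem_zpowers x) hxy (mem_zpowers y) hyx
  have h2 := sq_mul_eq_one_of_notMem hL (mem_zpowers x) hxy (inv_mem (mem_zpowers y))
    (fun h => hyx (by simpa using inv_mem h))
  rw [hc.mul_pow] at h1
  rw [hc.inv_right.mul_pow, inv_pow] at h2
  have h4 : x ^ 4 = 1 := by
    have e1 := eq_inv_of_mul_eq_one_left h1
    have e2 := eq_inv_of_mul_eq_one_left h2
    rw [inv_inv] at e2
    rw [show 4 = 2 + 2 by rfl, pow_add]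
    nth_rw 1 [e1]
    rw [e2, inv_mul_cancel]
  have hdvd := orderOf_dvd_of_pow_eq_one h4
  have := Nat.two_lt_of_totient_eq_two hx
  have := Nat.le_of_dvd four_pos hdvd
  interval_cases h : orderOf x <;> simp_all

theorem nonempty_mulEquiv_c4c2_or_d8c2 (hx : orderOf x = 4) (hxy : Commute x y)
    (hyx : y ∉ zpowers x) (hxy2 : (x * y) ^ 2 = 1) :
    Nonempty (G ≃* Multiplicative (ZMod 4 × ZMod 2)) ∨
      Nonempty (G ≃* DihedralGroup 4 × Multiplicative (ZMod 2)) := by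
  have ht : x * y ∉ zpowers x := fun h =>
    hyx (by simpa using mul_mem (inv_mem (mem_zpowers x)) h)
  have hto : orderOf (x * y) = 2 := by
    have : Fact (Nat.Prime 2) := ⟨Nat.prime_two⟩
    exact orderOf_eq_prime hxy2 fun h => ht (h ▸ one_mem _)
  have hP : ∀ g ∉ zpowers x ⊔ zpowers (x * y), g ^ 2 = 1 := fun g hg =>
    sq_eq_one_iff_orderOf_le_two.2 <| not_lt.1 fun h => by
      rcases hL g h with h | h
      · exact hg (mem_sup_left h)
      · refine hg (zpowers_le.2 ?_ h)
        simpa using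
          mul_mem (inv_mem (mem_sup_left (mem_zpowers x))) (mem_sup_right (mem_zpowers (x * y)))
  exact (nonempty_mulEquiv_zmod_prod_or_dihedralGroup_prod hx (by norm_num) hto
    ((Commute.refl x).mul_right hxy) ht hP).imp
    (fun ⟨e⟩ => ⟨e.trans (MulEquiv.prodMultiplicative _ _).symm⟩) id

theorem nonempty_mulEquiv_c6_or_d12 (hxy : zpowers x ≠ zpowers y)
    (hx : (orderOf x).totient = 2) (hy : (orderOf y).totient = 2) (hmem : x ∈ zpowers y) :
    Nonempty (G ≃* Multiplicative (ZMod 6)) ∨ Nonempty (G ≃* DihedralGroup 6) := by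
  have hne : orderOf x ≠ orderOf y := fun h => hxy (zpowers_eq_zpowers_of_mem hmem h)
  have hdvd := orderOf_dvd_of_mem_zpowers hmem
  have hy6 : orderOf y = 6 := by
    rcases Nat.eq_three_or_eq_four_or_eq_six_of_totient_eq_two hx with h1 | h1 | h1 <;>
      rcases Nat.eq_three_or_eq_four_or_eq_six_of_totient_eq_two hy with h2 | h2 | h2 <;>
      rw [h1, h2] at hdvd hne <;> omega
  refine nonempty_mulEquiv_zmod_or_dihedralGroup hy6 (by norm_num) fun g hg =>
    sq_eq_one_iff_orderOf_le_two.2 (not_lt.1 fun h => hg ?_)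
  exact (hL g h).elim (fun hg' => zpowers_le.2 hmem hg') id

end Classification

theorem nonempty_mulEquiv_of_two_zpowers {G : Type*} [Group G] [Finite G] {a b : G}
    (hab : zpowers a ≠ zpowers b) (ha : (orderOf a).totient = 2) (hb : (orderOf b).totient = 2)
    (hL : ∀ g : G, 2 < orderOf g → zpowers g = zpowers a ∨ zpowers g = zpowers b) :
    Nonempty (G ≃* Multiplicative (ZMod 4 × ZMod 2)) ∨
      Nonempty (G ≃* DihedralGroup 4 × Multiplicative (ZMod 2)) ∨
      Nonempty (G ≃* Multiplicative (ZMod 6)) ∨ Nonempty (G ≃* DihedralGroup 6) := by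
  have hL' : ∀ g, 2 < orderOf g → g ∈ zpowers a ∨ g ∈ zpowers b := fun g hg =>
    (hL g hg).imp (fun h => h.le (mem_zpowers g)) (fun h => h.le (mem_zpowers g))
  by_cases hab' : a ∈ zpowers b
  · exact Or.inr (Or.inr (nonempty_mulEquiv_c6_or_d12 hL' hab ha hb hab'))
  by_cases hba : b ∈ zpowers a
  · exact Or.inr (Or.inr
      (nonempty_mulEquiv_c6_or_d12 (fun g hg => (hL' g hg).symm) (Ne.symm hab) hb ha hba))
  have hb2 := Nat.two_lt_of_totient_eq_two hb
  have hab2 := sq_mul_eq_one_of_notMem hL' (mem_zpowers a) hab' (mem_zpowers b) hba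
  exact (nonempty_mulEquiv_c4c2_or_d8c2 hL' (orderOf_eq_four_of_notMem hL' ha hb2 hab' hba)
    (commute_of_notMem hL' ha hb2 hab' hba) hba hab2).imp id Or.inl

section Computation

variable {G : Type*} [Group G]

theorem card_isCyclic_subgroups_congr {K : Type*} [Group K] (e : G ≃* K) :
    Nat.card {H : Subgroup G // IsCyclic H} = Nat.card {H : Subgroup K // IsCyclic H} :=
  Nat.card_congr <| e.mapSubgroup.toEquiv.subtypeEquiv fun H =>
    (H.equivMapOfInjective e.toMonoidHom e.injective).isCyclic

theorem card_isCyclic_subgroups_eq_card_image [Fintype G] [DecidableEq G] :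
    Nat.card {H : Subgroup G // IsCyclic H} =
      (Finset.univ.image fun g : G => (Finset.range (Fintype.card G)).image (g ^ ·)).card := by
  classical
  have hpow : (fun g : G => (Finset.range (Fintype.card G)).image (g ^ ·)) =
      (fun H : Subgroup G => (H : Set G).toFinset) ∘ zpowers := by
    ext g x
    simp only [Function.comp_apply, Set.mem_toFinset, SetLike.mem_coe, Finset.mem_image,
      Finset.mem_range]
    refine ⟨fun ⟨n, _, hn⟩ => hn ▸ pow_mem (mem_zpowers g) n, fun hx => ?_⟩
    obtain ⟨n, hn, rfl⟩ := Finset.mem_image.1 (mem_zpowers_iff_mem_range_orderOf.1 hx)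
    exact ⟨n, (Finset.mem_range.1 hn).trans_le orderOf_le_card_univ, rfl⟩
  rw [hpow, ← Finset.image_image, Finset.card_image_of_injective _
    fun H K h => SetLike.coe_injective (Set.toFinset_inj.1 h), ← Nat.card_eq_finsetCard]
  exact Nat.card_congr (Equiv.subtypeEquivRight fun H => by
    simp [Subgroup.isCyclic_iff_exists_zpowers_eq_top])

end Computation

theorem stmt_2 (G : Type*) [Group G] [Finite G] :
    Nat.card {H : Subgroup G // IsCyclic H} = Nat.card G - 2 ↔
      (Nonempty (G ≃* Multiplicative (ZMod 4 × ZMod 2)) ∨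
       Nonempty (G ≃* DihedralGroup 4 × Multiplicative (ZMod 2)) ∨
       Nonempty (G ≃* Multiplicative (ZMod 6)) ∨
       Nonempty (G ≃* DihedralGroup 6)) := by
  constructor
  · intro h
    obtain ⟨a, b, hab, ha, hb, hL⟩ := exists_of_card_isCyclic_eq_card_sub_two h
    exact nonempty_mulEquiv_of_two_zpowers hab ha hb hL
  · rintro (h | h | h | h) <;> obtain ⟨e⟩ := h <;>
      rw [card_isCyclic_subgroups_congr e, Nat.card_congr e.toEquiv,
        card_isCyclic_subgroups_eq_card_image, Nat.card_eq_fintype_card] <;>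
      decide
end

section
/- A finite group G has exactly |G| cyclic subgroups if and only if G is an elementary abelian 2-group. -/
theorem stmt_5 (G : Type*) [Group G] [Finite G] :
    Nat.card {H : Subgroup G // IsCyclic H} = Nat.card G ↔
      ∀ g : G, g * g = 1 := by
  classical
  have iscyc : ∀ g : G, IsCyclic (Subgroup.zpowers g) := by
    intro g
    refine ⟨⟨⟨g, Subgroup.mem_zpowers g⟩, ?_⟩⟩
    rintro ⟨x, hx⟩
    obtain ⟨n, hn⟩ := Subgroup.mem_zpowers_iff.mp hx
    exact Subgroup.mem_zpowers_iff.mpr ⟨n, Subtype.ext (by simpa using hn)⟩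
  set f : G → {H : Subgroup G // IsCyclic H} :=
    fun g => ⟨Subgroup.zpowers g, iscyc g⟩ with hf
  have hsurj : Function.Surjective f := by
    rintro ⟨H, hH⟩
    obtain ⟨⟨g, hg⟩, hgen⟩ := hH.exists_generator
    refine ⟨g, ?_⟩
    apply Subtype.ext
    show Subgroup.zpowers g = H
    ext x
    constructor
    · intro hx
      obtain ⟨n, hn⟩ := Subgroup.mem_zpowers_iff.mp hx
      exact hn ▸ H.zpow_mem hg n
    · intro hx
      obtain ⟨n, hn⟩ := hgen ⟨x, hx⟩
      exact Subgroup.mem_zpowers_iff.mpr ⟨n, congrArg Subtype.val hn⟩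
  constructor
  · intro hcard g
    have hbij : Function.Bijective f :=
      (Nat.bijective_iff_surjective_and_card f).mpr ⟨hsurj, hcard.symm⟩
    have heq : f g = f g⁻¹ := by
      apply Subtype.ext
      show Subgroup.zpowers g = Subgroup.zpowers g⁻¹
      exact Subgroup.zpowers_inv.symm
    have := hbij.injective heq
    rw [mul_eq_one_iff_eq_inv]
    exact this
  · intro h
    have hinj : Function.Injective f := by
      intro a b hab
      have hab' : Subgroup.zpowers a = Subgroup.zpowers b :=
        congrArg Subtype.val hab
      have ha : a ∈ Subgroup.zpowers b := hab' ▸ Subgroup.mem_zpowers a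
      obtain ⟨n, hn⟩ := Subgroup.mem_zpowers_iff.mp ha
      rcases Int.even_or_odd n with ⟨k, hk⟩ | ⟨k, hk⟩
      · -- n even: a = 1, then b ∈ zpowers 1 so b = 1
        have ha1 : a = 1 := by
          rw [← hn, hk, zpow_add]
          exact h (b ^ k)
        have hb : b ∈ Subgroup.zpowers a := hab'.symm ▸ Subgroup.mem_zpowers b
        obtain ⟨m, hm⟩ := Subgroup.mem_zpowers_iff.mp hb
        rw [ha1, one_zpow] at hm
        rw [ha1, ← hm]
      · -- n odd: a = b
        rw [← hn, hk, zpow_add, zpow_one, two_mul, zpow_add]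
        rw [h (b ^ k), one_mul]
    exact (Nat.card_eq_of_bijective f ⟨hinj, hsurj⟩).symm
end

section
/- If a finite group G contains fewer than 6 cyclic subgroups of order 4, and s, t are elements of order 4 generating distinct cyclic subgroups with t·s·t⁻¹ ∈ ⟨s⟩, then s² = t². -/
private lemma stmt8_ord4 {G : Type*} [Group G] (x : G) (h4 : x ^ (4:ℕ) = 1)
    (h2 : x ^ (2:ℕ) ≠ 1) : orderOf x = 4 := by
  have h1 : orderOf x ∣ 4 := orderOf_dvd_of_pow_eq_one h4
  have h2' : ¬ orderOf x ∣ 2 := fun h => h2 (orderOf_dvd_iff_pow_eq_one.mp h)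
  have hle : orderOf x ≤ 4 := Nat.le_of_dvd (by norm_num) h1
  interval_cases h : orderOf x <;> simp_all <;> omega

private lemma stmt8_dvd {G : Type*} [Group G] (x : G) (hx : orderOf x = 4) (k : ℤ)
    (h : (4:ℤ) ∣ k) : x ^ k = 1 := by
  rw [← orderOf_dvd_iff_zpow_eq_one, hx]; exact_mod_cast h

private lemma stmt8_red {G : Type*} [Group G] (x : G) (hx : orderOf x = 4) (k : ℤ) :
    x ^ k = x ^ (k % 4) := by
  conv_lhs => rw [← Int.mul_ediv_add_emod k 4]
  rw [zpow_add, zpow_mul]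
  rw [show ((4:ℤ)) = ((4:ℕ):ℤ) by norm_num, zpow_natCast, ← hx, pow_orderOf_eq_one, one_zpow,
    one_mul]

private lemma stmt8_cyc {G : Type*} [Group G] (x : G) : IsCyclic (Subgroup.zpowers x) := by
  refine ⟨⟨⟨x, Subgroup.mem_zpowers x⟩, ?_⟩⟩
  rintro ⟨y, k, rfl⟩
  exact ⟨k, by ext; simp⟩

theorem stmt_8 (G : Type*) [Group G] [Finite G]
    (hlt : Nat.card {H : Subgroup G // IsCyclic H ∧ Nat.card H = 4} < 6)
    (s t : G) (hs : orderOf s = 4) (ht : orderOf t = 4)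
    (hne : Subgroup.zpowers s ≠ Subgroup.zpowers t)
    (hconj : t * s * t⁻¹ ∈ Subgroup.zpowers s) :
    s ^ 2 = t ^ 2 := by
  by_contra hne2
  have hs2 : s ^ (2:ℕ) ≠ 1 := fun h => by
    have := orderOf_dvd_of_pow_eq_one h; rw [hs] at this; omega
  have ht2 : t ^ (2:ℕ) ≠ 1 := fun h => by
    have := orderOf_dvd_of_pow_eq_one h; rw [ht] at this; omega
  -- Step 1: the intersection of ⟨s⟩ and ⟨t⟩ is trivial
  have hoddgen : ∀ (x y : G), orderOf x = 4 → (a : ℤ) → Odd a → (x ^ a) ^ a = x := by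
    intro x y hx a ⟨u, hu⟩
    rw [← zpow_mul]
    have h1 : a * a = 4 * (u * u + u) + 1 := by rw [hu]; ring
    rw [h1, zpow_add, zpow_mul, stmt8_dvd x hx 4 ⟨1, rfl⟩, one_zpow, one_mul, zpow_one]
  have hST : ∀ a b : ℤ, s ^ a = t ^ b → (4:ℤ) ∣ a ∧ (4:ℤ) ∣ b := by
    intro a b hab
    have hodda : ¬ Odd a := by
      intro ha
      have h1 : (s ^ a) ^ a = s := hoddgen s t hs a ha
      have hmem : s ∈ Subgroup.zpowers t := by
        rw [← h1, hab]
        exact Subgroup.mem_zpowers_iff.mpr ⟨b * a, by rw [zpow_mul]⟩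
      exact hne (Subgroup.eq_of_le_of_card_ge (Subgroup.zpowers_le.mpr hmem)
        (by rw [Nat.card_zpowers, Nat.card_zpowers, hs, ht]))
    have hoddb : ¬ Odd b := by
      intro hb
      have h1 : (t ^ b) ^ b = t := hoddgen t s ht b hb
      have hmem : t ∈ Subgroup.zpowers s := by
        rw [← h1, ← hab]
        exact Subgroup.mem_zpowers_iff.mpr ⟨a * b, by rw [zpow_mul]⟩
      exact hne.symm (Subgroup.eq_of_le_of_card_ge (Subgroup.zpowers_le.mpr hmem)
        (by rw [Nat.card_zpowers, Nat.card_zpowers, hs, ht]))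
    rw [Int.not_odd_iff_even] at hodda hoddb
    obtain ⟨a', rfl⟩ := hodda
    obtain ⟨b', rfl⟩ := hoddb
    rcases Int.even_or_odd a' with ⟨a'', rfl⟩ | ⟨a'', rfl⟩
    · -- 4 ∣ a
      have h4a : (4:ℤ) ∣ (a'' + a'') + (a'' + a'') := ⟨a'', by ring⟩
      have h1 : t ^ (b' + b') = 1 := by rw [← hab, stmt8_dvd s hs _ h4a]
      have h4b : (4:ℤ) ∣ (b' + b') := by
        have := orderOf_dvd_iff_zpow_eq_one.mpr h1
        rw [ht] at this; exact_mod_cast this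
      exact ⟨h4a, h4b⟩
    · -- a ≡ 2 mod 4, so s ^ a = s ^ 2
      exfalso
      have hsa : s ^ ((2 * a'' + 1) + (2 * a'' + 1)) = s ^ (2:ℤ) := by
        rw [stmt8_red s hs, show ((2 * a'' + 1) + (2 * a'' + 1)) % 4 = 2 % 4 by omega,
          ← stmt8_red s hs]
      rcases Int.even_or_odd b' with ⟨b'', rfl⟩ | ⟨b'', rfl⟩
      · have h4b : (4:ℤ) ∣ (b'' + b'') + (b'' + b'') := ⟨b'', by ring⟩
        have : s ^ (2:ℤ) = 1 := by rw [← hsa, hab, stmt8_dvd t ht _ h4b]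
        exact hs2 (by rw [zpow_two, ← pow_two] at this; exact this)
      · have htb : t ^ ((2 * b'' + 1) + (2 * b'' + 1)) = t ^ (2:ℤ) := by
          rw [stmt8_red t ht, show ((2 * b'' + 1) + (2 * b'' + 1)) % 4 = 2 % 4 by omega,
            ← stmt8_red t ht]
        apply hne2
        have : s ^ (2:ℤ) = t ^ (2:ℤ) := by rw [← hsa, hab, htb]
        rw [zpow_two, zpow_two, ← pow_two, ← pow_two] at this
        exact this
  -- Step 2: the conjugation exponent ε
  obtain ⟨ε, hε1, hεconj⟩ : ∃ ε : ℤ, (ε = 1 ∨ ε = -1) ∧ t * s * t⁻¹ = s ^ ε := by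
    obtain ⟨k, hk⟩ := Subgroup.mem_zpowers_iff.mp hconj
    rw [stmt8_red s hs k] at hk
    have h4 : k % 4 = 0 ∨ k % 4 = 1 ∨ k % 4 = 2 ∨ k % 4 = 3 := by omega
    rcases h4 with h | h | h | h <;> rw [h] at hk
    · exfalso
      have hs1 : s = 1 := by
        have : s = t⁻¹ * (t * s * t⁻¹) * t := by group
        rw [this, ← hk]; group
      rw [hs1] at hs; simp at hs
    · exact ⟨1, Or.inl rfl, by rw [← hk]⟩
    · exfalso
      have h1 : t * s ^ (2:ℕ) * t⁻¹ = (t * s * t⁻¹) ^ (2:ℕ) := conj_pow.symm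
      rw [← hk] at h1
      have h2 : (s ^ (2:ℤ)) ^ (2:ℕ) = 1 := by
        rw [← zpow_natCast, ← zpow_mul]
        exact stmt8_dvd s hs _ ⟨1, by norm_num⟩
      rw [h2] at h1
      apply hs2
      have : s ^ (2:ℕ) = t⁻¹ * (t * s ^ (2:ℕ) * t⁻¹) * t := by group
      rw [this, h1]; group
    · refine ⟨-1, Or.inr rfl, ?_⟩
      rw [← hk, stmt8_red s hs 3, stmt8_red s hs (-1)]
      norm_num
  have hs4 : s ^ (4:ℤ) = 1 := stmt8_dvd s hs 4 ⟨1, rfl⟩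
  have ht4 : t ^ (4:ℤ) = 1 := stmt8_dvd t ht 4 ⟨1, rfl⟩
  have hts : ∀ a : ℤ, t * s ^ a = s ^ (ε * a) * t := by
    intro a
    have h1 : t * s ^ a * t⁻¹ = (t * s * t⁻¹) ^ a := by rw [conj_zpow]
    rw [hεconj, ← zpow_mul] at h1
    calc t * s ^ a = (t * s ^ a * t⁻¹) * t := by group
    _ = s ^ (ε * a) * t := by rw [h1]
  have hts2 : ∀ a : ℤ, t ^ (2:ℤ) * s ^ a = s ^ a * t ^ (2:ℤ) := by
    intro a
    have hee : ε * (ε * a) = a := by rcases hε1 with rfl | rfl <;> ring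
    rw [zpow_two, mul_assoc, hts a, ← mul_assoc, hts (ε * a), hee, mul_assoc]
  -- normal form multiplication
  have hm0 : ∀ a c d : ℤ, (s ^ a * t ^ (0:ℤ)) * (s ^ c * t ^ d) = s ^ (a + c) * t ^ d := by
    intro a c d; rw [zpow_zero, zpow_add]; group
  have hm1 : ∀ a c d : ℤ, (s ^ a * t ^ (1:ℤ)) * (s ^ c * t ^ d) = s ^ (a + ε * c) * t ^ (1 + d) := by
    intro a c d
    calc s ^ a * t ^ (1:ℤ) * (s ^ c * t ^ d) = s ^ a * (t * s ^ c) * t ^ d := by group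
    _ = s ^ a * (s ^ (ε * c) * t) * t ^ d := by rw [hts c]
    _ = s ^ (a + ε * c) * t ^ (1 + d) := by rw [zpow_add, zpow_add]; group
  have hm2 : ∀ a c d : ℤ, (s ^ a * t ^ (2:ℤ)) * (s ^ c * t ^ d) = s ^ (a + c) * t ^ (2 + d) := by
    intro a c d
    calc s ^ a * t ^ (2:ℤ) * (s ^ c * t ^ d) = s ^ a * (t ^ (2:ℤ) * s ^ c) * t ^ d := by group
    _ = s ^ a * (s ^ c * t ^ (2:ℤ)) * t ^ d := by rw [hts2 c]
    _ = s ^ (a + c) * t ^ (2 + d) := by rw [zpow_add, zpow_add]; group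
  -- injectivity of normal forms
  have hEinj : ∀ a b c d : ℤ, s ^ a * t ^ b = s ^ c * t ^ d → (4:ℤ) ∣ a - c ∧ (4:ℤ) ∣ b - d := by
    intro a b c d h
    have h2 : s ^ (a - c) = t ^ (d - b) := by
      calc s ^ (a - c) = s ^ (-c) * (s ^ a * t ^ b) * t ^ (-b) := by
            rw [zpow_neg, zpow_neg, sub_eq_add_neg, zpow_add, zpow_neg]; group
      _ = s ^ (-c) * (s ^ c * t ^ d) * t ^ (-b) := by rw [h]
      _ = t ^ (d - b) := by
            rw [zpow_neg, zpow_neg, sub_eq_add_neg, zpow_add, zpow_neg]; group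
    have h3 := hST _ _ h2
    exact ⟨h3.1, by omega⟩
  have hE1 : ∀ a b : ℤ, s ^ a * t ^ b = 1 → (4:ℤ) ∣ a ∧ (4:ℤ) ∣ b := by
    intro a b h
    have := hEinj a b 0 0 (by simpa using h)
    simpa using this
  have hEone : ∀ a b : ℤ, (4:ℤ) ∣ a → (4:ℤ) ∣ b → s ^ a * t ^ b = 1 := by
    intro a b ha hb; rw [stmt8_dvd s hs a ha, stmt8_dvd t ht b hb, one_mul]
  -- the six generators
  set g1 : G := s ^ (1:ℤ) * t ^ (0:ℤ) with hg1
  set g2 : G := s ^ (0:ℤ) * t ^ (1:ℤ) with hg2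
  set g3 : G := s ^ (1:ℤ) * t ^ (1:ℤ) with hg3
  set g4 : G := s ^ (1:ℤ) * t ^ (2:ℤ) with hg4
  set g5 : G := s ^ (2:ℤ) * t ^ (1:ℤ) with hg5
  set g6 : G := s ^ (3:ℤ) * t ^ (1:ℤ) with hg6
  -- squares
  have q3 : g3 * g3 = s ^ (1 + ε) * t ^ (2:ℤ) := by
    rw [hg3, hm1, show (1 + ε * 1 : ℤ) = 1 + ε by ring, show ((1:ℤ) + 1) = 2 by norm_num]
  have q4 : g4 * g4 = s ^ (2:ℤ) * t ^ (4:ℤ) := by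
    rw [hg4, hm2, show ((1:ℤ) + 1) = 2 by norm_num, show ((2:ℤ) + 2) = 4 by norm_num]
  have q5 : g5 * g5 = s ^ (2 + 2 * ε) * t ^ (2:ℤ) := by
    rw [hg5, hm1, show (2 + ε * 2 : ℤ) = 2 + 2 * ε by ring, show ((1:ℤ) + 1) = 2 by norm_num]
  have q6 : g6 * g6 = s ^ (3 + 3 * ε) * t ^ (2:ℤ) := by
    rw [hg6, hm1, show (3 + ε * 3 : ℤ) = 3 + 3 * ε by ring, show ((1:ℤ) + 1) = 2 by norm_num]
  -- orders
  have pow4 : ∀ x : G, x ^ (4:ℕ) = (x * x) * (x * x) := fun x => by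
    rw [show (4:ℕ) = 2 * 2 from rfl, pow_mul, pow_two, pow_two]
  have pow2 : ∀ x : G, x ^ (2:ℕ) = x * x := fun x => pow_two x
  have o1 : orderOf g1 = 4 := by rw [hg1]; simpa using hs
  have o2 : orderOf g2 = 4 := by rw [hg2]; simpa using ht
  have o3 : orderOf g3 = 4 := by
    apply stmt8_ord4
    · rw [pow4, q3, hm2]
      exact hEone _ _ (by rcases hε1 with rfl | rfl <;> omega) (by omega)
    · rw [pow2, q3]
      intro h; have := hE1 _ _ h; omega
  have o4 : orderOf g4 = 4 := by
    apply stmt8_ord4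
    · rw [pow4, q4, ht4, mul_one, ← zpow_add]
      exact stmt8_dvd s hs _ ⟨1, by norm_num⟩
    · rw [pow2, q4]
      intro h; have := hE1 _ _ h; omega
  have o5 : orderOf g5 = 4 := by
    apply stmt8_ord4
    · rw [pow4, q5, hm2]
      exact hEone _ _ (by rcases hε1 with rfl | rfl <;> omega) (by omega)
    · rw [pow2, q5]
      intro h; have := hE1 _ _ h; omega
  have o6 : orderOf g6 = 4 := by
    apply stmt8_ord4
    · rw [pow4, q6, hm2]
      exact hEone _ _ (by rcases hε1 with rfl | rfl <;> omega) (by omega)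
    · rw [pow2, q6]
      intro h; have := hE1 _ _ h; omega
  -- distinctness of the generated subgroups
  have zpNe : ∀ x y : G, orderOf x = 4 → orderOf y = 4 → x ≠ y → x * y ≠ 1 →
      Subgroup.zpowers x ≠ Subgroup.zpowers y := by
    intro x y hx hy hxy hxy1 heq
    have hmem : y ∈ Subgroup.zpowers x := heq ▸ Subgroup.mem_zpowers y
    obtain ⟨k, hk⟩ := Subgroup.mem_zpowers_iff.mp hmem
    rw [stmt8_red x hx k] at hk
    have h4 : k % 4 = 0 ∨ k % 4 = 1 ∨ k % 4 = 2 ∨ k % 4 = 3 := by omega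
    rcases h4 with h | h | h | h <;> rw [h] at hk
    · rw [zpow_zero] at hk; rw [← hk] at hy; simp at hy
    · rw [zpow_one] at hk; exact hxy hk
    · have h1 : y ^ (2:ℕ) = 1 := by
        rw [← hk, ← zpow_natCast, ← zpow_mul]
        exact stmt8_dvd x hx _ ⟨1, by norm_num⟩
      have := orderOf_dvd_of_pow_eq_one h1
      rw [hy] at this; omega
    · apply hxy1
      rw [← hk, show x * x ^ (3:ℤ) = x ^ (4:ℤ) by group]
      exact stmt8_dvd x hx 4 ⟨1, rfl⟩
  -- the 15 pairwise inequalities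
  have ne12 : g1 ≠ g2 := fun h => by have := hEinj _ _ _ _ h; omega
  have ne13 : g1 ≠ g3 := fun h => by have := hEinj _ _ _ _ h; omega
  have ne14 : g1 ≠ g4 := fun h => by have := hEinj _ _ _ _ h; omega
  have ne15 : g1 ≠ g5 := fun h => by have := hEinj _ _ _ _ h; omega
  have ne16 : g1 ≠ g6 := fun h => by have := hEinj _ _ _ _ h; omega
  have ne23 : g2 ≠ g3 := fun h => by have := hEinj _ _ _ _ h; omega
  have ne24 : g2 ≠ g4 := fun h => by have := hEinj _ _ _ _ h; omega
  have ne25 : g2 ≠ g5 := fun h => by have := hEinj _ _ _ _ h; omega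
  have ne26 : g2 ≠ g6 := fun h => by have := hEinj _ _ _ _ h; omega
  have ne34 : g3 ≠ g4 := fun h => by have := hEinj _ _ _ _ h; omega
  have ne35 : g3 ≠ g5 := fun h => by have := hEinj _ _ _ _ h; omega
  have ne36 : g3 ≠ g6 := fun h => by have := hEinj _ _ _ _ h; omega
  have ne45 : g4 ≠ g5 := fun h => by have := hEinj _ _ _ _ h; omega
  have ne46 : g4 ≠ g6 := fun h => by have := hEinj _ _ _ _ h; omega
  have ne56 : g5 ≠ g6 := fun h => by have := hEinj _ _ _ _ h; omega
  have pr12 : g1 * g2 ≠ 1 := fun h => by rw [hg1, hg2, hm0] at h; have := hE1 _ _ h; omega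
  have pr13 : g1 * g3 ≠ 1 := fun h => by rw [hg1, hg3, hm0] at h; have := hE1 _ _ h; omega
  have pr14 : g1 * g4 ≠ 1 := fun h => by rw [hg1, hg4, hm0] at h; have := hE1 _ _ h; omega
  have pr15 : g1 * g5 ≠ 1 := fun h => by rw [hg1, hg5, hm0] at h; have := hE1 _ _ h; omega
  have pr16 : g1 * g6 ≠ 1 := fun h => by rw [hg1, hg6, hm0] at h; have := hE1 _ _ h; omega
  have pr23 : g2 * g3 ≠ 1 := fun h => by rw [hg2, hg3, hm1] at h; have := hE1 _ _ h; omega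
  have pr24 : g2 * g4 ≠ 1 := fun h => by rw [hg2, hg4, hm1] at h; have := hE1 _ _ h; omega
  have pr25 : g2 * g5 ≠ 1 := fun h => by rw [hg2, hg5, hm1] at h; have := hE1 _ _ h; omega
  have pr26 : g2 * g6 ≠ 1 := fun h => by rw [hg2, hg6, hm1] at h; have := hE1 _ _ h; omega
  have pr34 : g3 * g4 ≠ 1 := fun h => by rw [hg3, hg4, hm1] at h; have := hE1 _ _ h; omega
  have pr35 : g3 * g5 ≠ 1 := fun h => by rw [hg3, hg5, hm1] at h; have := hE1 _ _ h; omega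
  have pr36 : g3 * g6 ≠ 1 := fun h => by rw [hg3, hg6, hm1] at h; have := hE1 _ _ h; omega
  have pr45 : g4 * g5 ≠ 1 := fun h => by rw [hg4, hg5, hm2] at h; have := hE1 _ _ h; omega
  have pr46 : g4 * g6 ≠ 1 := fun h => by rw [hg4, hg6, hm2] at h; have := hE1 _ _ h; omega
  have pr56 : g5 * g6 ≠ 1 := fun h => by rw [hg5, hg6, hm1] at h; have := hE1 _ _ h; omega
  have d12 := zpNe _ _ o1 o2 ne12 pr12
  have d13 := zpNe _ _ o1 o3 ne13 pr13
  have d14 := zpNe _ _ o1 o4 ne14 pr14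
  have d15 := zpNe _ _ o1 o5 ne15 pr15
  have d16 := zpNe _ _ o1 o6 ne16 pr16
  have d23 := zpNe _ _ o2 o3 ne23 pr23
  have d24 := zpNe _ _ o2 o4 ne24 pr24
  have d25 := zpNe _ _ o2 o5 ne25 pr25
  have d26 := zpNe _ _ o2 o6 ne26 pr26
  have d34 := zpNe _ _ o3 o4 ne34 pr34
  have d35 := zpNe _ _ o3 o5 ne35 pr35
  have d36 := zpNe _ _ o3 o6 ne36 pr36
  have d45 := zpNe _ _ o4 o5 ne45 pr45
  have d46 := zpNe _ _ o4 o6 ne46 pr46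
  have d56 := zpNe _ _ o5 o6 ne56 pr56
  -- assemble the injection
  have : Finite (Subgroup G) := Finite.of_injective _ SetLike.coe_injective
  let g : Fin 6 → G := ![g1, g2, g3, g4, g5, g6]
  have ogi : ∀ i : Fin 6, orderOf (g i) = 4 := by
    intro i; fin_cases i <;> assumption
  let F : Fin 6 → {H : Subgroup G // IsCyclic H ∧ Nat.card H = 4} := fun i =>
    ⟨Subgroup.zpowers (g i), stmt8_cyc _, by rw [Nat.card_zpowers, ogi i]⟩
  have hFinj : Function.Injective F := by
    intro i j hij
    have h' : Subgroup.zpowers (g i) = Subgroup.zpowers (g j) := Subtype.ext_iff.mp hij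
    fin_cases i <;> fin_cases j <;>
      first
        | rfl
        | exact absurd h' (by assumption)
        | exact absurd h'.symm (by assumption)
  have hge : 6 ≤ Nat.card {H : Subgroup G // IsCyclic H ∧ Nat.card H = 4} := by
    have := Nat.card_le_card_of_injective F hFinj
    simpa using this
  omega
end

section
/- If a finite group G has exactly two cyclic subgroups of order 4 and has an element of order 3, then G has an element of order 12. -/
/-!
Conjugation permutes the two cyclic subgroups of order 4, and an element `g` of order 3 acts
trivially on a set with fewer than 3 points, so `g` normalizes such a subgroup `K`. Conjugation
by `g` is then an automorphism of `K` whose order divides both 3 and `|Aut K| = φ 4 = 2`, so `g`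
centralizes `K`, and `g` times a generator of `K` has order `3 * 4 = 12`.
-/

open Subgroup Pointwise

theorem MonoidHom.map_eq_one_of_coprime_orderOf_natCard {G Q : Type*} [Group G] [Group Q]
    [Finite Q] (f : G →* Q) {g : G} (h : (orderOf g).Coprime (Nat.card Q)) : f g = 1 :=
  orderOf_eq_one_iff.mp <|
    Nat.eq_one_of_dvd_coprimes h (orderOf_map_dvd f g) (orderOf_dvd_natCard (f g))

theorem MulAction.smul_eq_self_of_natCard_lt_orderOf {G α : Type*} [Group G] [MulAction G α]
    [Finite α] {g : G} (hg : (orderOf g).Prime) (hα : Nat.card α < orderOf g) (a : α) :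
    g • a = a := by
  have hcop : (orderOf g).Coprime (Nat.card (Equiv.Perm α)) := by
    rw [Nat.card_perm, hg.coprime_iff_not_dvd, hg.dvd_factorial]
    omega
  exact congr($((MulAction.toPermHom G α).map_eq_one_of_coprime_orderOf_natCard hcop) a)

theorem Subgroup.mem_centralizer_of_mem_normalizer_of_coprime {G : Type*} [Group G]
    {K : Subgroup G} [IsCyclic K] [Finite K] {g : G} (hg : g ∈ normalizer (K : Set G))
    (hcop : (orderOf g).Coprime (Nat.card K).totient) : g ∈ centralizer (K : Set G) := by
  have hker : ⟨g, hg⟩ ∈ K.normalizerMonoidHom.ker := by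
    refine K.normalizerMonoidHom.map_eq_one_of_coprime_orderOf_natCard ?_
    rwa [orderOf_mk, IsCyclic.card_mulAut]
  rwa [normalizerMonoidHom_ker, mem_subgroupOf] at hker

theorem Subgroup.exists_orderOf_eq_mul_of_mem_centralizer {G : Type*} [Group G]
    {K : Subgroup G} [IsCyclic K] [Finite K] {g : G} (hg : g ∈ centralizer (K : Set G))
    (hcop : (orderOf g).Coprime (Nat.card K)) : ∃ y : G, orderOf y = orderOf g * Nat.card K := by
  obtain ⟨x, hx⟩ := IsCyclic.exists_generator (α := K)
  have hxord : orderOf (x : G) = Nat.card K := by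
    rw [orderOf_coe, orderOf_eq_card_of_forall_mem_zpowers hx]
  have hcomm : Commute g x := (mem_centralizer_iff.mp hg x x.2).symm
  exact ⟨g * x, hxord ▸ hcomm.orderOf_mul_eq_mul_orderOf_of_coprime (hxord ▸ hcop)⟩

def cyclicSubgroupsOfCard (G : Type*) [Group G] (n : ℕ) :
    SubMulAction (ConjAct G) (Subgroup G) where
  carrier := {H | IsCyclic H ∧ Nat.card H = n}
  smul_mem' c H := fun ⟨hcyc, hcard⟩ =>
    ⟨(equivSMul c H).isCyclic.mp hcyc,
      (Nat.card_congr (equivSMul c H).toEquiv).symm.trans hcard⟩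

theorem stmt_10 (G : Type*) [Group G] [Finite G]
    (h4 : Nat.card {H : Subgroup G // IsCyclic H ∧ Nat.card H = 4} = 2)
    (h3 : ∃ g : G, orderOf g = 3) :
    ∃ g : G, orderOf g = 12 := by
  obtain ⟨g, hg⟩ := h3
  have hS : Nat.card (cyclicSubgroupsOfCard G 4) = 2 := h4
  obtain ⟨K, hKcyc, hKcard⟩ : Nonempty (cyclicSubgroupsOfCard G 4) :=
    (Nat.card_pos_iff.mp (by omega)).1
  have hg' : orderOf (ConjAct.toConjAct g) = 3 := (MulEquiv.orderOf_eq _ g).trans hg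
  have hfix : ConjAct.toConjAct g • K = K := congr_arg Subtype.val <|
    MulAction.smul_eq_self_of_natCard_lt_orderOf (hg' ▸ Nat.prime_three) (by omega)
      (⟨K, hKcyc, hKcard⟩ : cyclicSubgroupsOfCard G 4)
  have hcent : g ∈ centralizer (K : Set G) :=
    mem_centralizer_of_mem_normalizer_of_coprime (conjAct_pointwise_smul_iff.mp hfix)
      (by rw [hg, hKcard]; decide)
  simpa [hg, hKcard] using
    exists_orderOf_eq_mul_of_mem_centralizer hcent (by rw [hg, hKcard]; decide)
end

section
/- If G is a finite group that has exactly one cyclic subgroup of order a, where a = 4 or a is an odd prime, and every other nontrivial cyclic subgroup of G has order 2 (any number of subgroups of order 2 being allowed), then G is isomorphic to C_a or to the dihedral group D_{2a}. -/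
lemma isCyclic_zpowers' {G : Type*} [Group G] (g : G) : IsCyclic (Subgroup.zpowers g) := by
  refine ⟨⟨g, Subgroup.mem_zpowers g⟩, ?_⟩
  rintro ⟨x, k, rfl⟩
  exact ⟨k, by ext; simp⟩

theorem stmt_12 (G : Type*) [Group G] [Finite G] (a : ℕ)
    (ha : a = 4 ∨ (Nat.Prime a ∧ Odd a))
    (huniq : ∃! H : Subgroup G, IsCyclic H ∧ Nat.card H = a)
    (hall : ∀ H : Subgroup G, IsCyclic H → H ≠ ⊥ →
      Nat.card H = 2 ∨ Nat.card H = a) :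
    Nonempty (G ≃* Multiplicative (ZMod a)) ∨ Nonempty (G ≃* DihedralGroup a) := by
  obtain ⟨H, ⟨hHcyc, hHcard⟩, hHuniq⟩ := huniq
  have ha3 : 3 ≤ a := by
    rcases ha with h | ⟨hp, hodd⟩
    · omega
    · have h2 := hp.two_le
      rcases Nat.lt_or_ge a 3 with h | h
      · interval_cases a
        · simp [Nat.odd_iff] at hodd
      · exact h
  haveI : NeZero a := ⟨by omega⟩
  have horder : ∀ t : G, t ≠ 1 → orderOf t = 2 ∨ orderOf t = a := by
    intro t ht
    have := hall (Subgroup.zpowers t) (isCyclic_zpowers' t)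
      (Subgroup.zpowers_ne_bot.2 ht)
    rwa [Nat.card_zpowers] at this
  have hmemH : ∀ t : G, orderOf t = a → t ∈ H := by
    intro t ht
    have : Subgroup.zpowers t = H :=
      hHuniq _ ⟨isCyclic_zpowers' t, by rw [Nat.card_zpowers, ht]⟩
    exact this ▸ Subgroup.mem_zpowers t
  obtain ⟨⟨x, hxH⟩, hxgen⟩ := hHcyc.exists_generator
  have hxord : orderOf x = a := by
    rw [← Subgroup.orderOf_mk x hxH, orderOf_eq_card_of_forall_mem_zpowers hxgen, hHcard]
  have hzp : Subgroup.zpowers x = H :=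
    hHuniq _ ⟨isCyclic_zpowers' x, by rw [Nat.card_zpowers, hxord]⟩
  have hsq : ∀ t : G, t ∉ H → t * t = 1 := by
    intro t ht
    have ht1 : t ≠ 1 := fun h => ht (h ▸ H.one_mem)
    rcases horder t ht1 with h2 | hA
    · have := pow_orderOf_eq_one t; rw [h2, pow_two] at this; exact this
    · exact absurd (hmemH t hA) ht
  have hconj : ∀ t : G, t ∉ H → ∀ y, y ∈ H → t * y * t = y⁻¹ := by
    intro t ht y hy
    have hty : t * y ∉ H := fun h => ht (by
      have := H.mul_mem h (H.inv_mem hy); simpa [mul_assoc] using this)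
    have := hsq (t * y) hty
    have h1 : t * y * t * y = 1 := by rw [← this]; group
    exact eq_inv_of_mul_eq_one_left h1
  have hprod : ∀ t s : G, t ∉ H → s ∉ H → t * s ∈ H := by
    intro t s ht hs
    by_contra hts
    have hts2 : (t * s) * (t * s) = 1 := hsq _ hts
    have h1 : (t * s) * x * (t * s) = x⁻¹ := hconj _ hts x hxH
    have hsx : s * x * s = x⁻¹ := hconj s hs x hxH
    have htx : t * x⁻¹ * t = x := by
      rw [hconj t ht _ (H.inv_mem hxH), inv_inv]
    have hsx2 : s * x = x⁻¹ * s := by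
      have e := congrArg (· * s) hsx
      simpa [mul_assoc, hsq s hs] using e
    have htx2 : t * x⁻¹ = x * t := by
      have e := congrArg (· * t) htx
      simpa [mul_assoc, hsq t ht] using e
    have h4 : (t * s) * x * (t * s) = x := by
      calc (t * s) * x * (t * s) = t * (s * x) * (t * s) := by group
        _ = t * (x⁻¹ * s) * (t * s) := by rw [hsx2]
        _ = (t * x⁻¹) * (s * (t * s)) := by group
        _ = (x * t) * (s * (t * s)) := by rw [htx2]
        _ = x * ((t * s) * (t * s)) := by group
        _ = x := by rw [hts2, mul_one]
    have hxinv : x = x⁻¹ := h4.symm.trans h1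
    have hxx : x * x = 1 := eq_inv_iff_mul_eq_one.mp hxinv
    have : orderOf x ∣ 2 := orderOf_dvd_of_pow_eq_one (by rw [pow_two]; exact hxx)
    rw [hxord] at this
    have := Nat.le_of_dvd (by norm_num) this
    omega
  by_cases htop : ∀ t : G, t ∈ H
  · left
    have hHt : H = ⊤ := Subgroup.eq_top_iff' H |>.2 htop
    haveI hcyc : IsCyclic G := ⟨x, fun y =>
      show y ∈ Subgroup.zpowers x by rw [hzp, hHt]; trivial⟩
    have hcard : Nat.card G = a := by
      rw [← hHcard, hHt]; exact (Nat.card_congr Subgroup.topEquiv.toEquiv).symm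
    exact ⟨(hcard ▸ zmodCyclicMulEquiv hcyc).symm⟩
  · right
    push_neg at htop
    obtain ⟨g, hg⟩ := htop
    have hg2 : g * g = 1 := hsq g hg
    have key : ∀ i j : ZMod a, x ^ (i + j).val = x ^ i.val * x ^ j.val := by
      intro i j
      rw [← pow_add, pow_eq_pow_iff_modEq, hxord, ZMod.val_add]
      exact Nat.mod_modEq _ _
    have hinv : ∀ i : ZMod a, (x ^ i.val)⁻¹ = x ^ (-i).val := by
      intro i
      have h0 : x ^ (-i + i).val = 1 := by
        rw [neg_add_cancel]; simp [ZMod.val_zero]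
      have : x ^ (-i).val * x ^ i.val = 1 := by rw [← key]; exact h0
      exact (eq_inv_of_mul_eq_one_left this).symm
    have hgconj : ∀ i : ZMod a, g * x ^ i.val * g = x ^ (-i).val := by
      intro i
      rw [hconj g hg _ (H.pow_mem hxH i.val), hinv]
    have hgmove : ∀ i : ZMod a, x ^ i.val * g = g * x ^ (-i).val := by
      intro i
      calc x ^ i.val * g = (g * g) * (x ^ i.val * g) := by rw [hg2, one_mul]
        _ = g * (g * x ^ i.val * g) := by group
        _ = g * x ^ (-i).val := by rw [hgconj]
    set f : DihedralGroup a → G := fun d =>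
      match d with
      | .r i => x ^ i.val
      | .sr i => g * x ^ i.val with hfdef
    have hf : ∀ d e : DihedralGroup a, f (d * e) = f d * f e := by
      rintro (i | i) (j | j)
      · show x ^ (i + j).val = x ^ i.val * x ^ j.val
        exact key i j
      · show g * x ^ (j - i).val = x ^ i.val * (g * x ^ j.val)
        calc g * x ^ (j - i).val = g * x ^ (-i + j).val := by rw [neg_add_eq_sub]
          _ = g * (x ^ (-i).val * x ^ j.val) := by rw [key]
          _ = (g * x ^ (-i).val) * x ^ j.val := by group
          _ = (x ^ i.val * g) * x ^ j.val := by rw [hgmove]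
          _ = x ^ i.val * (g * x ^ j.val) := by group
      · show g * x ^ (i + j).val = (g * x ^ i.val) * x ^ j.val
        rw [key, mul_assoc]
      · show x ^ (j - i).val = (g * x ^ i.val) * (g * x ^ j.val)
        calc x ^ (j - i).val = x ^ (-i + j).val := by rw [neg_add_eq_sub]
          _ = x ^ (-i).val * x ^ j.val := key _ _
          _ = (g * x ^ i.val * g) * x ^ j.val := by rw [hgconj]
          _ = (g * x ^ i.val) * (g * x ^ j.val) := by group
    have hpowH : ∀ n : ℕ, x ^ n ∈ H := fun n => H.pow_mem hxH n
    have hvalinj : ∀ i j : ZMod a, x ^ i.val = x ^ j.val → i = j := by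
      intro i j h
      rw [pow_eq_pow_iff_modEq, hxord] at h
      have hi := ZMod.val_lt i
      have hj := ZMod.val_lt j
      have : i.val % a = j.val % a := h
      rw [Nat.mod_eq_of_lt hi, Nat.mod_eq_of_lt hj] at this
      exact ZMod.val_injective a this
    have hginj : ∀ i : ZMod a, g * x ^ i.val ∉ H := by
      intro i hmem
      exact hg (by
        have := H.mul_mem hmem (H.inv_mem (hpowH i.val))
        simpa [mul_assoc] using this)
    have hinj : Function.Injective f := by
      rintro (i | i) (j | j) h
      · exact congrArg DihedralGroup.r (hvalinj i j h)
      · exact absurd ((show x ^ i.val = g * x ^ j.val from h) ▸ hpowH i.val) (hginj j)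
      · exact absurd ((show x ^ j.val = g * x ^ i.val from h.symm) ▸ hpowH j.val) (hginj i)
      · exact congrArg DihedralGroup.sr (hvalinj i j (mul_left_cancel h))
    have hsurjH : ∀ y : G, y ∈ H → ∃ n : ℕ, y = x ^ n := by
      intro y hy
      have : y ∈ Subgroup.zpowers x := hzp ▸ hy
      obtain ⟨n, hn⟩ := mem_powers_iff_mem_zpowers.mpr this
      exact ⟨n, hn.symm⟩
    have hxmod : ∀ n : ℕ, x ^ ((n : ZMod a)).val = x ^ n := by
      intro n
      rw [ZMod.val_natCast, ← hxord, pow_mod_orderOf]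
    have hsurj : Function.Surjective f := by
      intro y
      by_cases hy : y ∈ H
      · obtain ⟨n, rfl⟩ := hsurjH y hy
        exact ⟨.r n, hxmod n⟩
      · have hgy : g * y ∈ H := hprod g y hg hy
        obtain ⟨n, hn⟩ := hsurjH _ hgy
        refine ⟨.sr n, ?_⟩
        show g * x ^ ((n : ZMod a)).val = y
        rw [hxmod n, ← hn, ← mul_assoc, hg2, one_mul]
    exact ⟨(MulEquiv.ofBijective (MonoidHom.mk' f hf) ⟨hinj, hsurj⟩).symm⟩
end

section
/- There is no finite group G having exactly two cyclic subgroups of order 4, an element of order 5, and no elements of order 20; more precisely, if a finite group G has exactly two cyclic subgroups of order 4 and an element of order 5, then G has an element of order 20. -/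
theorem stmt_19 (G : Type*) [Group G] [Finite G]
    (h4 : Nat.card {H : Subgroup G // IsCyclic H ∧ Nat.card H = 4} = 2)
    (h5 : ∃ g : G, orderOf g = 5) :
    ∃ g : G, orderOf g = 20 := by
  classical
  obtain ⟨g, hg⟩ := h5
  set S := {H : Subgroup G // IsCyclic H ∧ Nat.card H = 4} with hSdef
  haveI : Finite S := Subtype.finite
  have key : ∀ (a : G) (H : Subgroup G), IsCyclic H → Nat.card H = 4 →
      IsCyclic (H.map (MulAut.conj a).toMonoidHom) ∧
      Nat.card (H.map (MulAut.conj a).toMonoidHom) = 4 := by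
    intro a H hc hcard
    have e := H.equivMapOfInjective (MulAut.conj a).toMonoidHom (MulAut.conj a).injective
    exact ⟨isCyclic_of_surjective e.toMonoidHom e.surjective,
      by rw [← Nat.card_congr e.toEquiv, hcard]⟩
  have hmapmap : ∀ (a b : G) (H : Subgroup G),
      (H.map (MulAut.conj a).toMonoidHom).map (MulAut.conj b).toMonoidHom
        = H.map (MulAut.conj (b * a)).toMonoidHom := by
    intro a b H
    rw [Subgroup.map_map]
    congr 1
    ext x
    simp [mul_assoc]
  have hmapone : ∀ (H : Subgroup G), H.map (MulAut.conj (1 : G)).toMonoidHom = H := by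
    intro H; ext x; simp
  let f : G → S → S := fun a s => ⟨s.1.map (MulAut.conj a).toMonoidHom,
    key a s.1 s.2.1 s.2.2⟩
  have hf : ∀ a b s, f a (f b s) = f (a * b) s := by
    intro a b s
    exact Subtype.ext (hmapmap b a s.1)
  have hf1 : ∀ s, f 1 s = s := fun s => Subtype.ext (hmapone s.1)
  let e : Equiv.Perm S :=
    ⟨f g, f g⁻¹, fun s => by rw [hf, inv_mul_cancel, hf1], fun s => by rw [hf, mul_inv_cancel, hf1]⟩
  have hpow : ∀ (n : ℕ) (s : S), (e ^ n) s = f (g ^ n) s := by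
    intro n
    induction n with
    | zero =>
      intro s
      simp only [pow_zero, Equiv.Perm.one_apply]
      exact (hf1 s).symm
    | succ n ih =>
      intro s
      rw [pow_succ, Equiv.Perm.mul_apply, pow_succ]
      show (e ^ n) (f g s) = _
      rw [ih, hf]
  have he5 : e ^ 5 = 1 := by
    ext s
    rw [hpow, ← hg, pow_orderOf_eq_one, hf1]
    rfl
  haveI : Fintype S := Fintype.ofFinite S
  have hcard2 : Nat.card (Equiv.Perm S) = 2 := by
    rw [Nat.card_eq_fintype_card, Fintype.card_perm, ← Nat.card_eq_fintype_card, h4]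
    decide
  have hdvd2 : orderOf e ∣ 2 := hcard2 ▸ orderOf_dvd_natCard e
  have hdvd5 : orderOf e ∣ 5 := orderOf_dvd_of_pow_eq_one he5
  have he1 : e = 1 := by
    have h1 := Nat.dvd_gcd hdvd2 hdvd5
    rw [show Nat.gcd 2 5 = 1 from rfl, Nat.dvd_one, orderOf_eq_one_iff] at h1
    exact h1
  -- get an element x of order 4
  have hne : Nonempty S := Nat.card_pos_iff.mp (by rw [h4]; norm_num) |>.1
  obtain ⟨⟨H, hHc, hHcard⟩⟩ := hne
  obtain ⟨y, hy⟩ := hHc.exists_ofOrder_eq_natCard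
  set x : G := (y : G) with hxdef
  have hx : orderOf x = 4 := by
    rw [hxdef, orderOf_submonoid, hy, hHcard]
  -- the subgroup generated by x is in S
  have hKc : IsCyclic (Subgroup.zpowers x) := by
    refine ⟨⟨⟨x, Subgroup.mem_zpowers x⟩, fun a => ?_⟩⟩
    obtain ⟨n, hn⟩ := Subgroup.mem_zpowers_iff.mp a.2
    exact Subgroup.mem_zpowers_iff.mpr ⟨n, Subtype.ext (by simpa using hn)⟩
  have hKcard : Nat.card (Subgroup.zpowers x) = 4 := by rw [Nat.card_zpowers, hx]
  set s : S := ⟨Subgroup.zpowers x, hKc, hKcard⟩ with hsdef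
  have hfix : (Subgroup.zpowers x).map (MulAut.conj g).toMonoidHom = Subgroup.zpowers x := by
    have : e s = s := by rw [he1]; rfl
    exact congrArg Subtype.val this
  -- g x g⁻¹ ∈ zpowers x
  have hmem : g * x * g⁻¹ ∈ Subgroup.zpowers x := by
    rw [← hfix]
    exact ⟨x, Subgroup.mem_zpowers x, rfl⟩
  obtain ⟨k, hk⟩ := Subgroup.mem_zpowers_iff.mp hmem
  -- conj preserves order
  have hordc : orderOf (g * x * g⁻¹) = 4 := by
    have := orderOf_injective (MulAut.conj g).toMonoidHom (MulAut.conj g).injective x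
    simpa [hx] using this
  have hconjz : ∀ (n : ℤ) (a : G), g * a ^ n * g⁻¹ = (g * a * g⁻¹) ^ n := by
    intro n a
    have := map_zpow (MulAut.conj g) a n
    simpa using this
  have hx4 : x ^ (4 : ℤ) = 1 := by
    rw [show ((4:ℤ)) = ((4:ℕ):ℤ) by norm_num, zpow_natCast, ← hx, pow_orderOf_eq_one]
  -- k is odd
  have hkodd : Odd k := by
    rcases Int.even_or_odd k with ⟨j, hj⟩ | h
    · exfalso
      have hc2 : (g * x * g⁻¹) ^ (2:ℕ) = 1 := by
        rw [← hk, ← zpow_natCast, ← zpow_mul,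
          show k * ((2:ℕ):ℤ) = 4 * j by push_cast; omega, zpow_mul, hx4, one_zpow]
      have := orderOf_dvd_of_pow_eq_one hc2
      rw [hordc] at this
      omega
    · exact h
  obtain ⟨m, hm⟩ := hkodd
  -- g^2 commutes with x
  have h2 : g * (g * x * g⁻¹) * g⁻¹ = x := by
    rw [← hk, hconjz, ← hk, ← zpow_mul,
      show k * k = 4 * (m * m + m) + 1 by rw [hm]; ring,
      zpow_add, zpow_mul, hx4, one_zpow, one_mul, zpow_one]
  have hcomm2 : Commute (g * g) x := by
    have hc : g * g * x * (g * g)⁻¹ = x := by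
      calc g * g * x * (g * g)⁻¹ = g * (g * x * g⁻¹) * g⁻¹ := by group
        _ = x := h2
    exact mul_inv_eq_iff_eq_mul.mp hc
  have hcomm4 : Commute (g * g * (g * g)) x := hcomm2.mul_left hcomm2
  have hg5 : g ^ 5 = 1 := by rw [← hg, pow_orderOf_eq_one]
  have hginv : g = (g * g * (g * g))⁻¹ := by
    refine eq_inv_of_mul_eq_one_left ?_
    calc g * (g * g * (g * g)) = g ^ 5 := by simp [pow_succ, mul_assoc]
      _ = 1 := hg5
  have hcomm : Commute g x := hginv ▸ hcomm4.inv_left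
  refine ⟨g * x, ?_⟩
  have := hcomm.orderOf_mul_eq_mul_orderOf_of_coprime (by rw [hg, hx]; norm_num)
  rw [this, hg, hx]
end
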